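/- arXiv:1511.03377 — 6 statements merged into one kernel-verified Lean document; each statement's English description precedes it below -/
import Mathlib

section
/- Let 1 < p < ∞ and let c = (c_j)_{j ∈ ℕ} be a positive sequence. Then the family (|s|!/s! · c^s)_{s ∈ F} belongs to ℓ_p(F) if and only if ‖c‖_{ℓ_1(ℕ)} ≤ 1. -/
/-!
Write `a s = |s|!/s! · c^s`. By the multinomial theorem the `a s` with `|s| = n` and support in a
finite set `A` add up to `(∑_{j ∈ A} c j)^n`, and there are at most `(n+1)^|A|` of them. So if a
finite partial sum of `c` exceeds `1`, the family `a` is unbounded and `a^p` cannot be summable.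

Conversely, if `‖c‖₁ ≤ 1` then each layer `|s| = n` has total mass at most `1`, so it contributes
at most `(max_{|s|=n} a s)^(p-1)` to `∑ a^p`. Writing
`a s = n!/n^n · ∏_j (n c_j)^{s_j}/s_j!`, Stirling's formula bounds `n! eⁿ/nⁿ` by `e √n`, and the
Poisson bound `μ^m/m! ≤ e^μ/√μ` applied to the first `k` coordinates gains a factor `n^{-1/2}` for
each of them (this is where `c_j > 0` for every `j` enters). Hence `a s ≤ C_k n^{(1-k)/2}`, and for
`k` large the layer bounds are summable.
-/

/-- `|s|!/s!` for a finitely supported multi-index `s`. -/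
noncomputable def mcoef (s : ℕ →₀ ℕ) : ℝ :=
  (Nat.factorial (s.sum fun _ n => n) : ℝ) / ∏ j ∈ s.support, (Nat.factorial (s j) : ℝ)

/-- `c^s = ∏_j c_j^{s_j}`. -/
noncomputable def fpow (c : ℕ → ℝ) (s : ℕ →₀ ℕ) : ℝ :=
  ∏ j ∈ s.support, c j ^ s j

open Finset Real Filter Topology
open scoped Nat

lemma pow_div_factorial_le_floor {μ : ℝ} (hμ : 0 ≤ μ) (m : ℕ) :
    μ ^ m / m ! ≤ μ ^ ⌊μ⌋₊ / (⌊μ⌋₊)! := by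
  set m₀ := ⌊μ⌋₊
  rcases le_total m₀ m with h | h
  · obtain ⟨d, rfl⟩ := Nat.exists_eq_add_of_le h
    have hfact : (m₀ ! * (m₀ + 1) ^ d : ℝ) ≤ (m₀ + d)! := by
      exact_mod_cast Nat.factorial_mul_pow_le_factorial
    have hμd : μ ^ d ≤ (m₀ + 1 : ℝ) ^ d := pow_le_pow_left₀ hμ (Nat.lt_floor_add_one μ).le d
    calc μ ^ (m₀ + d) / (m₀ + d)! ≤ μ ^ m₀ * (m₀ + 1) ^ d / (m₀ ! * (m₀ + 1) ^ d) := by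
          rw [pow_add]; gcongr
      _ = μ ^ m₀ / m₀ ! := by field_simp
  · obtain ⟨d, hd⟩ := Nat.exists_eq_add_of_le h
    have hfact : ((m + d)! : ℝ) ≤ m ! * (m + d) ^ d := by
      rw [← Nat.factorial_mul_ascFactorial]
      exact_mod_cast Nat.mul_le_mul_left _ (Nat.ascFactorial_le_pow_add m d)
    have hμd : (m + d : ℝ) ^ d ≤ μ ^ d := by
      gcongr
      have hfloor : (m₀ : ℝ) ≤ μ := Nat.floor_le hμ
      rwa [hd, Nat.cast_add] at hfloor
    rw [hd, div_le_div_iff₀ (by positivity) (by positivity)]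
    calc μ ^ m * ((m + d)! : ℝ) ≤ μ ^ m * (m ! * μ ^ d) := by gcongr; exact hfact.trans (by gcongr)
      _ = μ ^ (m + d) * m ! := by ring

lemma pow_div_factorial_le_exp_div_sqrt_two_pi_mul {μ : ℝ} (hμ : 0 ≤ μ) {m : ℕ} (hm : m ≠ 0) :
    μ ^ m / m ! ≤ exp μ / √(2 * π * m) := by
  have hm' : (0 : ℝ) < m := by exact_mod_cast Nat.pos_of_ne_zero hm
  have hratio : (μ / m) ^ m ≤ exp (μ - m) := by
    calc (μ / m) ^ m ≤ exp (μ / m - 1) ^ m := by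
          gcongr; linarith [add_one_le_exp (μ / m - 1)]
      _ = exp (μ - m) := by rw [← exp_nat_mul]; congr 1; field_simp
  calc μ ^ m / m ! ≤ μ ^ m / (√(2 * π * m) * (m / exp 1) ^ m) := by
        gcongr; exact Stirling.le_factorial_stirling m
    _ = (μ / m) ^ m * exp m / √(2 * π * m) := by
        rw [div_pow, div_pow, ← exp_nat_mul, mul_one]; field_simp
    _ ≤ exp (μ - m) * exp m / √(2 * π * m) := by gcongr
    _ = exp μ / √(2 * π * m) := by rw [← exp_add, sub_add_cancel]

lemma pow_div_factorial_le_exp_div_sqrt {μ : ℝ} (hμ : 0 < μ) (m : ℕ) :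
    μ ^ m / m ! ≤ exp μ / √μ := by
  rcases lt_or_ge μ 1 with hμ1 | hμ1
  · calc μ ^ m / m ! ≤ exp μ := pow_div_factorial_le_exp μ hμ.le m
      _ ≤ exp μ / √μ := le_div_self (exp_pos μ).le (sqrt_pos.2 hμ) (sqrt_le_one.2 hμ1.le)
  · have hfloor : (1 : ℝ) ≤ ⌊μ⌋₊ := by exact_mod_cast Nat.floor_pos.2 hμ1
    calc μ ^ m / m ! ≤ μ ^ ⌊μ⌋₊ / (⌊μ⌋₊)! := pow_div_factorial_le_floor hμ.le m
      _ ≤ exp μ / √(2 * π * ⌊μ⌋₊) :=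
          pow_div_factorial_le_exp_div_sqrt_two_pi_mul hμ.le (Nat.floor_pos.2 hμ1).ne'
      _ ≤ exp μ / √μ := by
          gcongr
          nlinarith [Nat.lt_floor_add_one μ, pi_gt_three]

lemma factorial_mul_exp_div_pow_le {n : ℕ} (hn : n ≠ 0) :
    n ! * exp n / n ^ n ≤ exp 1 * √n := by
  have hn' : (0 : ℝ) < n := by exact_mod_cast Nat.pos_of_ne_zero hn
  have hseq : Stirling.stirlingSeq n ≤ exp 1 / √2 := by
    obtain ⟨m, rfl⟩ := Nat.exists_eq_succ_of_ne_zero hn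
    simpa [Stirling.stirlingSeq_one] using Stirling.stirlingSeq'_antitone (Nat.zero_le m)
  rw [Stirling.stirlingSeq, div_le_div_iff₀ (by positivity) (by positivity), sqrt_mul zero_le_two,
    div_pow, ← exp_nat_mul, mul_one] at hseq
  rw [div_le_iff₀ (by positivity)]
  field_simp at hseq
  nlinarith [exp_pos (n:ℝ)]

lemma sqrt_mul_inv_sqrt_pow {x : ℝ} (hx : 0 < x) (k : ℕ) :
    √x * (√x ^ k)⁻¹ = x ^ ((1 - k : ℝ) / 2) := by
  rw [sqrt_eq_rpow, ← rpow_natCast, ← rpow_mul hx.le, ← rpow_neg hx.le, ← rpow_add hx]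
  ring_nf

lemma degree_eq_sum_of_support_subset {ι M : Type*} [AddCommMonoid M] {s : ι →₀ M}
    {A : Finset ι} (hA : s.support ⊆ A) :
    s.degree = ∑ j ∈ A, s j :=
  Finsupp.sum_of_support_subset s hA (fun _ n => n) fun _ _ => rfl

lemma card_finsuppAntidiag_le {ι : Type*} [DecidableEq ι] (A : Finset ι) (n : ℕ) :
    #(A.finsuppAntidiag n) ≤ (n + 1) ^ #A := by
  calc #(A.finsuppAntidiag n) ≤ #(Fintype.piFinset fun _ : A => range (n + 1)) := by
        refine card_le_card_of_injOn (fun f a => f a) (fun f hf => ?_) (fun f hf g hg hfg => ?_)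
        · rw [mem_coe, mem_finsuppAntidiag] at hf
          simp only [mem_coe, Fintype.mem_piFinset, mem_range]
          intro a
          exact Nat.lt_succ_of_le (hf.1 ▸ single_le_sum (fun _ _ => Nat.zero_le _) a.2)
        · rw [mem_coe, mem_finsuppAntidiag] at hf hg
          ext i
          by_cases hi : i ∈ A
          · exact congrFun hfg ⟨i, hi⟩
          · rw [Finsupp.notMem_support_iff.1 (mt (@hf.2 i) hi),
              Finsupp.notMem_support_iff.1 (mt (@hg.2 i) hi)]
    _ = (n + 1) ^ #A := by simp

lemma le_one_of_pow_le_mul_pow {t M : ℝ} {m : ℕ} (h : ∀ n : ℕ, t ^ n ≤ M * (n + 1) ^ m) :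
    t ≤ 1 := by
  by_contra! ht
  have hM : 0 < M := by simpa using (h 0).trans_lt' one_pos
  have hlim : Tendsto (fun n : ℕ => ((n + 1 : ℕ) : ℝ) ^ m / t ^ (n + 1)) atTop (𝓝 0) :=
    (tendsto_pow_const_div_const_pow_of_one_lt m ht).comp (tendsto_add_atTop_nat 1)
  obtain ⟨n, hn⟩ :=
    (hlim.eventually (gt_mem_nhds (show 0 < (M * t)⁻¹ by positivity))).exists
  rw [div_lt_iff₀ (by positivity), pow_succ, lt_inv_mul_iff₀ (by positivity)] at hn
  push_cast at hn
  nlinarith [mul_le_mul_of_nonneg_right (h n) (zero_le_one.trans ht.le)]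

lemma summable_of_sum_fiber_le {α β : Type*} {f : α → ℝ} (hf : ∀ x, 0 ≤ f x) (g : α → β)
    {b : β → ℝ} (hb : Summable b)
    (h : ∀ (y : β) (V : Finset α), (∀ x ∈ V, g x = y) → ∑ x ∈ V, f x ≤ b y) : Summable f := by
  classical
  have hb0 : ∀ y, 0 ≤ b y := fun y => by simpa using h y ∅ (by simp)
  refine summable_of_sum_le hf (c := ∑' y, b y) fun V => ?_
  calc ∑ x ∈ V, f x = ∑ y ∈ V.image g, ∑ x ∈ V with g x = y, f x :=
        (sum_fiberwise_of_maps_to (fun x hx => mem_image_of_mem g hx) f).symm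
    _ ≤ ∑ y ∈ V.image g, b y := sum_le_sum fun y _ => h y _ fun x hx => (mem_filter.1 hx).2
    _ ≤ ∑' y, b y := hb.sum_le_tsum _ fun y _ => hb0 y

lemma sum_rpow_le_rpow_sub_one {ι : Type*} {V : Finset ι} {a : ι → ℝ} {B p : ℝ} (hp : 1 ≤ p)
    (ha : ∀ i ∈ V, 0 ≤ a i) (hB : 0 ≤ B) (haB : ∀ i ∈ V, a i ≤ B) (hsum : ∑ i ∈ V, a i ≤ 1) :
    ∑ i ∈ V, a i ^ p ≤ B ^ (p - 1) := by
  calc ∑ i ∈ V, a i ^ p = ∑ i ∈ V, a i ^ (p - 1) * a i := sum_congr rfl fun i hi => by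
        rw [← rpow_add_one' (ha i hi) (by linarith), sub_add_cancel]
    _ ≤ ∑ i ∈ V, B ^ (p - 1) * a i := sum_le_sum fun i hi =>
        mul_le_mul_of_nonneg_right (rpow_le_rpow (ha i hi) (haB i hi) (by linarith)) (ha i hi)
    _ = B ^ (p - 1) * ∑ i ∈ V, a i := (mul_sum _ _ _).symm
    _ ≤ B ^ (p - 1) := mul_le_of_le_one_right (rpow_nonneg hB _) hsum

lemma mcoef_mul_fpow_nonneg {c : ℕ → ℝ} (hc : ∀ j, 0 ≤ c j) (s : ℕ →₀ ℕ) : 0 ≤ mcoef s * fpow c s :=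
  mul_nonneg (by unfold mcoef; positivity) (prod_nonneg fun j _ => pow_nonneg (hc j) _)

lemma mcoef_mul_fpow_zero (c : ℕ → ℝ) : mcoef 0 * fpow c 0 = 1 := by
  simp [mcoef, fpow]

lemma mcoef_mul_fpow_eq_factorial_mul_prod {c : ℕ → ℝ} {s : ℕ →₀ ℕ} {A : Finset ℕ}
    (hA : s.support ⊆ A) :
    mcoef s * fpow c s = s.degree ! * ∏ j ∈ A, c j ^ s j / (s j)! := by
  rw [← prod_subset hA fun j _ hj => by simp [Finsupp.notMem_support_iff.1 hj], prod_div_distrib,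
    mcoef, fpow, Finsupp.degree_apply]
  simp only [Finsupp.sum]
  ring

lemma mcoef_mul_fpow_eq_multinomial {c : ℕ → ℝ} {s : ℕ →₀ ℕ} {A : Finset ℕ} (hA : s.support ⊆ A) :
    mcoef s * fpow c s = Nat.multinomial A s * ∏ j ∈ A, c j ^ s j := by
  have hspec : (∏ j ∈ A, ((s j)! : ℝ)) * Nat.multinomial A s = (∑ j ∈ A, s j)! := by
    exact_mod_cast Nat.multinomial_spec A s
  rw [mcoef_mul_fpow_eq_factorial_mul_prod hA, degree_eq_sum_of_support_subset hA, ← hspec,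
    prod_div_distrib]
  field_simp

lemma sum_finsuppAntidiag_mcoef_mul_fpow (c : ℕ → ℝ) (A : Finset ℕ) (n : ℕ) :
    ∑ s ∈ A.finsuppAntidiag n, mcoef s * fpow c s = (∑ j ∈ A, c j) ^ n := by
  let g : (ℕ → ℕ) → ℝ := fun k => Nat.multinomial A k * ∏ j ∈ A, c j ^ k j
  calc ∑ s ∈ A.finsuppAntidiag n, mcoef s * fpow c s = ∑ s ∈ A.finsuppAntidiag n, g s :=
        sum_congr rfl fun s hs => mcoef_mul_fpow_eq_multinomial (mem_finsuppAntidiag.1 hs).2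
    _ = ∑ k ∈ piAntidiag A n, g k := by
        rw [finsuppAntidiag, sum_map]
        exact sum_attach _ g
    _ = (∑ j ∈ A, c j) ^ n := (sum_pow_eq_sum_piAntidiag A c n).symm

lemma sum_mcoef_mul_fpow_le_one {c : ℕ → ℝ} (hc0 : ∀ j, 0 ≤ c j)
    (hc1 : ∀ A : Finset ℕ, ∑ j ∈ A, c j ≤ 1) {n : ℕ} {V : Finset (ℕ →₀ ℕ)}
    (hV : ∀ s ∈ V, s.degree = n) :
    ∑ s ∈ V, mcoef s * fpow c s ≤ 1 := by
  set A := V.biUnion Finsupp.support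
  have hVA : V ⊆ A.finsuppAntidiag n := fun s hs =>
    mem_finsuppAntidiag'.2 ⟨hV s hs, subset_biUnion_of_mem _ hs⟩
  calc ∑ s ∈ V, mcoef s * fpow c s ≤ ∑ s ∈ A.finsuppAntidiag n, mcoef s * fpow c s :=
        sum_le_sum_of_subset_of_nonneg hVA fun s _ _ => mcoef_mul_fpow_nonneg hc0 s
    _ = (∑ j ∈ A, c j) ^ n := sum_finsuppAntidiag_mcoef_mul_fpow c A n
    _ ≤ 1 := pow_le_one₀ (sum_nonneg fun j _ => hc0 j) (hc1 A)

lemma mcoef_mul_fpow_le {c : ℕ → ℝ} (hc : ∀ j, 0 < c j)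
    (hc1 : ∀ A : Finset ℕ, ∑ j ∈ A, c j ≤ 1) (K : Finset ℕ) {s : ℕ →₀ ℕ} (hs : s.degree ≠ 0) :
    mcoef s * fpow c s ≤ (exp 1 * ∏ j ∈ K, (√(c j))⁻¹) * (s.degree : ℝ) ^ ((1 - #K : ℝ) / 2) := by
  set n := s.degree
  have hn : (0 : ℝ) < n := by exact_mod_cast Nat.pos_of_ne_zero hs
  set U := s.support ∪ K
  have hsU : s.support ⊆ U := subset_union_left
  have hpoisson : ∀ j ∈ U, (n * c j) ^ s j / (s j)! ≤
      exp (n * c j) * if j ∈ K then (√(n * c j))⁻¹ else 1 := by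
    intro j _
    have hμ : 0 < n * c j := mul_pos hn (hc j)
    split_ifs
    · rw [← div_eq_mul_inv]; exact pow_div_factorial_le_exp_div_sqrt hμ _
    · rw [mul_one]; exact pow_div_factorial_le_exp _ hμ.le _
  have hexp : ∏ j ∈ U, exp (n * c j) ≤ exp n := by
    rw [← exp_sum, ← mul_sum]
    exact exp_le_exp.2 (mul_le_of_le_one_right hn.le (hc1 U))
  calc mcoef s * fpow c s = n ! / n ^ n * ∏ j ∈ U, (n * c j) ^ s j / (s j)! := by
        have hpow : (n : ℝ) ^ n = ∏ j ∈ U, (n : ℝ) ^ s j := by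
          rw [prod_pow_eq_pow_sum, ← degree_eq_sum_of_support_subset hsU]
        have hprod : ∏ j ∈ U, ((n : ℝ) * c j) ^ s j / (s j)! =
            n ^ n * ∏ j ∈ U, c j ^ s j / (s j)! := by
          rw [hpow, ← prod_mul_distrib]
          exact prod_congr rfl fun j _ => by rw [mul_pow, mul_div_assoc]
        rw [mcoef_mul_fpow_eq_factorial_mul_prod hsU, hprod]
        field_simp
        exact mul_comm _ _
    _ ≤ n ! / n ^ n * ∏ j ∈ U, (exp (n * c j) * if j ∈ K then (√(n * c j))⁻¹ else 1) := by
        refine mul_le_mul_of_nonneg_left (prod_le_prod (fun j _ => ?_) hpoisson) (by positivity)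
        exact div_nonneg (pow_nonneg (mul_pos hn (hc j)).le _) (by positivity)
    _ = n ! / n ^ n * (∏ j ∈ U, exp (n * c j)) * ∏ j ∈ K, (√(n * c j))⁻¹ := by
        rw [prod_mul_distrib, prod_ite_mem, inter_eq_right.2 subset_union_right]
        ring
    _ ≤ n ! / n ^ n * exp n * ∏ j ∈ K, (√(n * c j))⁻¹ := by gcongr
    _ ≤ exp 1 * √n * ∏ j ∈ K, (√(n * c j))⁻¹ := by
        refine mul_le_mul_of_nonneg_right ?_ (by positivity)
        rw [div_mul_eq_mul_div]
        exact factorial_mul_exp_div_pow_le hs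
    _ = (exp 1 * ∏ j ∈ K, (√(c j))⁻¹) * (√n * (√n ^ #K)⁻¹) := by
        simp_rw [sqrt_mul hn.le, mul_inv, prod_mul_distrib, prod_const]
        ring
    _ = (exp 1 * ∏ j ∈ K, (√(c j))⁻¹) * (n : ℝ) ^ ((1 - #K : ℝ) / 2) := by
        rw [sqrt_mul_inv_sqrt_pow hn]

lemma sum_le_one_of_mcoef_mul_fpow_le {c : ℕ → ℝ} {M : ℝ}
    (hM : ∀ s, mcoef s * fpow c s ≤ M) (A : Finset ℕ) : ∑ j ∈ A, c j ≤ 1 := by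
  have hM0 : 0 ≤ M := (mcoef_mul_fpow_zero c).symm.trans_le (hM 0) |>.trans' zero_le_one
  refine le_one_of_pow_le_mul_pow (M := M) (m := #A) fun n => ?_
  calc (∑ j ∈ A, c j) ^ n = ∑ s ∈ A.finsuppAntidiag n, mcoef s * fpow c s :=
        (sum_finsuppAntidiag_mcoef_mul_fpow c A n).symm
    _ ≤ #(A.finsuppAntidiag n) • M := sum_le_card_nsmul _ _ _ fun s _ => hM s
    _ ≤ M * (n + 1) ^ #A := by
        rw [nsmul_eq_mul, mul_comm]
        gcongr
        exact_mod_cast card_finsuppAntidiag_le A n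

lemma mcoef_mul_fpow_le_tsum_rpow {c : ℕ → ℝ} {p : ℝ} (hp : 0 < p) (hc : ∀ j, 0 ≤ c j)
    (hS : Summable fun s => (mcoef s * fpow c s) ^ p) (s : ℕ →₀ ℕ) :
    mcoef s * fpow c s ≤ (∑' s, (mcoef s * fpow c s) ^ p) ^ p⁻¹ := by
  have ha := fun s => mcoef_mul_fpow_nonneg hc s
  calc mcoef s * fpow c s = ((mcoef s * fpow c s) ^ p) ^ p⁻¹ := (rpow_rpow_inv (ha s) hp.ne').symm
    _ ≤ _ := rpow_le_rpow (rpow_nonneg (ha s) p)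
        (hS.le_tsum s fun s _ => rpow_nonneg (ha s) p) (inv_nonneg.2 hp.le)

lemma summable_mcoef_mul_fpow_rpow {c : ℕ → ℝ} {p : ℝ} (hp : 1 < p) (hc : ∀ j, 0 < c j)
    (hc1 : ∀ A : Finset ℕ, ∑ j ∈ A, c j ≤ 1) :
    Summable fun s => (mcoef s * fpow c s) ^ p := by
  have hc0 : ∀ j, 0 ≤ c j := fun j => (hc j).le
  obtain ⟨k, hk⟩ := exists_nat_gt (1 + 2 / (p - 1))
  set C := exp 1 * ∏ j ∈ range k, (√(c j))⁻¹
  have hC : 0 ≤ C := by positivity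
  set r : ℝ := (1 - k) / 2
  let β : ℕ → ℝ := fun n => if n = 0 then 1 else C * n ^ r
  have hβ0 : ∀ n, 0 ≤ β n := fun n => by
    by_cases hn : n = 0 <;> simp only [β, hn, if_true, if_false] <;> positivity
  have hβ : ∀ s, mcoef s * fpow c s ≤ β s.degree := fun s => by
    by_cases hs : s.degree = 0
    · simp [β, (Finsupp.degree_eq_zero_iff s).1 hs, mcoef_mul_fpow_zero]
    · simp only [β, hs, if_false]
      simpa only [card_range] using mcoef_mul_fpow_le hc hc1 (range k) hs
  have hr : r * (p - 1) < -1 := by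
    have := (div_lt_iff₀ (sub_pos.2 hp)).1 (lt_sub_iff_add_lt'.2 hk)
    simp only [r]
    nlinarith
  have hsummable : Summable fun n => β n ^ (p - 1) := by
    rw [← summable_nat_add_iff 1]
    refine (((summable_nat_add_iff 1).2 (summable_nat_rpow.2 hr)).mul_left (C ^ (p - 1))).congr
      fun n => ?_
    simp only [β, Nat.add_one_ne_zero, if_false]
    rw [mul_rpow hC (by positivity), ← rpow_mul (by positivity)]
  refine summable_of_sum_fiber_le (fun s => rpow_nonneg (mcoef_mul_fpow_nonneg hc0 s) p)
    Finsupp.degree hsummable fun n V hV => ?_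
  exact sum_rpow_le_rpow_sub_one hp.le (fun s _ => mcoef_mul_fpow_nonneg hc0 s) (hβ0 n)
    (fun s hs => hV s hs ▸ hβ s) (sum_mcoef_mul_fpow_le_one hc0 hc1 hV)

/-- for `1 < p < ∞`, `(|s|!/s! · c^s)_s ∈ ℓ_p(F)` iff `‖c‖_{ℓ_1} ≤ 1`. -/
theorem stmt3 (p : ℝ) (hp : 1 < p) (c : ℕ → ℝ) (hc : ∀ j, 0 < c j) :
    Summable (fun s : ℕ →₀ ℕ => (mcoef s * fpow c s) ^ p) ↔
      (Summable c ∧ (∑' j, c j) ≤ 1) := by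
  have hc0 : ∀ j, 0 ≤ c j := fun j => (hc j).le
  constructor
  · intro hS
    have hc1 := sum_le_one_of_mcoef_mul_fpow_le
      (mcoef_mul_fpow_le_tsum_rpow (zero_lt_one.trans hp) hc0 hS)
    have hsc : Summable c := summable_of_sum_le hc0 hc1
    exact ⟨hsc, hsc.tsum_le_of_sum_le hc1⟩
  · rintro ⟨hsc, ht⟩
    exact summable_mcoef_mul_fpow_rpow hp hc fun A => (hsc.sum_le_tsum A fun j _ => hc0 j).trans ht
end

section
/- Let c = (c_j)_{j ∈ ℕ} be a nonnegative sequence with Σ_j c_j < 1. Then the family (|s|!/s! · c^s)_{s ∈ F} is summable, with sum Σ_{s ∈ F} (|s|!/s!) c^s = 1/(1 - Σ_j c_j). -/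
/-!
Grouping the multi-indices by `|s| = n`, the multinomial theorem gives
`Σ_{|s| = n} (|s|!/s!) c^s = (Σ_j c_j)^n`: directly when only finitely many `c_j` are involved,
and in general by taking the supremum over finite sets of indices, which is harmless because
all terms are nonnegative. Summing the geometric series over `n` then gives `(1 - Σ_j c_j)⁻¹`.
In `ℝ≥0∞` every rearrangement is free and the identity holds unconditionally; `Σ_j c_j < 1`
is only needed to come back to `ℝ`.
-/

open Finset
open scoped ENNReal NNReal

variable {ι : Type*}

theorem Finset.sum_pow_eq_sum_finsuppAntidiag {R : Type*} [CommSemiring R] [DecidableEq ι]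
    (T : Finset ι) (c : ι → R) (n : ℕ) :
    (∑ i ∈ T, c i) ^ n =
      ∑ s ∈ finsuppAntidiag T n, s.multinomial * s.prod fun i m => c i ^ m := by
  rw [sum_pow_eq_sum_piAntidiag]
  symm
  refine sum_bij (fun s _ => ⇑s) (fun s hs => ?_) (fun _ _ _ _ h => DFunLike.coe_injective h)
    (fun k hk => ?_) (fun s hs => ?_)
  · rw [mem_finsuppAntidiag] at hs
    exact mem_piAntidiag.2 ⟨hs.1, fun i hi => hs.2 (Finsupp.mem_support_iff.2 hi)⟩
  · rw [mem_piAntidiag] at hk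
    exact ⟨Finsupp.onFinset T k hk.2,
      mem_finsuppAntidiag.2 ⟨hk.1, Finsupp.support_onFinset_subset⟩, rfl⟩
  · have hsupp := (mem_finsuppAntidiag.1 hs).2
    rw [Finsupp.multinomial_eq_of_support_subset hsupp, Finsupp.prod_of_support_subset _ hsupp]
    simp

theorem Finset.mem_finsuppAntidiag_iff_degree [DecidableEq ι] {T : Finset ι} {n : ℕ}
    {s : ι →₀ ℕ} : s ∈ finsuppAntidiag T n ↔ s.degree = n ∧ s.support ⊆ T :=
  mem_finsuppAntidiag'

theorem ENNReal.tsum_degree_preimage_eq_pow (c : ι → ℝ≥0∞) (n : ℕ) :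
    ∑' s : Finsupp.degree ⁻¹' {n}, (s.1.multinomial * s.1.prod fun i m => c i ^ m : ℝ≥0∞) =
      (∑' i, c i) ^ n := by
  classical
  have hcofinal : ∀ U : Finset (Finsupp.degree ⁻¹' {n}), ∃ T : Finset ι,
      U ⊆ (finsuppAntidiag T n).subtype (· ∈ Finsupp.degree ⁻¹' {n}) := fun U =>
    ⟨U.biUnion fun s => s.1.support, fun s hs => mem_subtype.2
      (mem_finsuppAntidiag_iff_degree.2 ⟨s.2, subset_biUnion_of_mem (fun s => s.1.support) hs⟩)⟩
  rw [ENNReal.tsum_eq_iSup_sum' _ hcofinal, ENNReal.tsum_eq_iSup_sum, ENNReal.iSup_pow]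
  refine iSup_congr fun T => ?_
  rw [sum_pow_eq_sum_finsuppAntidiag]
  exact sum_subtype_of_mem (fun s : ι →₀ ℕ => (s.multinomial * s.prod fun i m => c i ^ m : ℝ≥0∞))
    (p := (· ∈ Finsupp.degree ⁻¹' {n})) fun s hs => (mem_finsuppAntidiag_iff_degree.1 hs).1

theorem ENNReal.tsum_multinomial_mul_prod_pow (c : ι → ℝ≥0∞) :
    ∑' s : ι →₀ ℕ, (s.multinomial * s.prod fun i m => c i ^ m : ℝ≥0∞) = (1 - ∑' i, c i)⁻¹ := by
  rw [← ENNReal.tsum_fiberwise _ Finsupp.degree]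
  simp only [ENNReal.tsum_degree_preimage_eq_pow, ENNReal.tsum_geometric]

theorem NNReal.hasSum_multinomial_mul_prod_pow {c : ι → ℝ≥0} (hc : Summable c)
    (h1 : ∑' i, c i < 1) :
    HasSum (fun s : ι →₀ ℕ => (s.multinomial * s.prod fun i m => c i ^ m : ℝ≥0))
      (1 - ∑' i, c i)⁻¹ := by
  have h := (ENNReal.summable (f := fun s : ι →₀ ℕ =>
    (s.multinomial * s.prod fun i m => (c i : ℝ≥0∞) ^ m : ℝ≥0∞))).hasSum
  rw [ENNReal.tsum_multinomial_mul_prod_pow, ← ENNReal.coe_tsum hc, ← ENNReal.coe_one,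
    ← ENNReal.coe_sub, ← ENNReal.coe_inv (tsub_pos_of_lt h1).ne'] at h
  exact_mod_cast h

theorem mcoef_eq_multinomial (s : ℕ →₀ ℕ) : mcoef s = s.multinomial := by
  rw [mcoef, div_eq_iff (by positivity), ← Nat.cast_prod, ← Nat.cast_mul, mul_comm,
    Finsupp.multinomial_eq, Nat.multinomial_spec]
  rfl

/-- if `Σ_j c_j < 1` then `Σ_{s ∈ F} (|s|!/s!) c^s = 1/(1 - Σ_j c_j)`. -/
theorem stmt4 (c : ℕ → ℝ) (hc : ∀ j, 0 ≤ c j) (hs : Summable c)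
    (h1 : (∑' j, c j) < 1) :
    Summable (fun s : ℕ →₀ ℕ => mcoef s * fpow c s) ∧
      (∑' s : ℕ →₀ ℕ, mcoef s * fpow c s) = (1 - ∑' j, c j)⁻¹ := by
  lift c to ℕ → ℝ≥0 using hc
  rw [NNReal.summable_coe] at hs
  rw [← NNReal.coe_tsum, ← NNReal.coe_one, NNReal.coe_lt_coe] at h1
  have h := NNReal.hasSum_coe.2 (NNReal.hasSum_multinomial_mul_prod_pow hs h1)
  rw [NNReal.coe_inv, NNReal.coe_sub h1.le, NNReal.coe_tsum] at h
  have hterm : ∀ s, mcoef s * fpow (fun j => (c j : ℝ)) s =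
      ((s.multinomial * s.prod fun i m => c i ^ m : ℝ≥0) : ℝ) := fun s => by
    simp [mcoef_eq_multinomial, fpow, Finsupp.prod]
  simp only [hterm]
  exact ⟨h.summable, h.tsum_eq⟩
end

section
/- Let V be a Banach space, I^∞ = [-1,1]^ℕ, and let (g_s)_{s ∈ F} ⊂ W ⊆ V with (‖g_s‖_W)_{s ∈ F} ∈ ℓ_1(F), and (φ_s)_{s ∈ F} bounded functions on I^∞ with sup norm 1. Suppose operators (P_n) satisfy ‖v - P_n v‖_V ≤ C_D n^{-α} ‖v‖_W for all v ∈ W, and define δ_k as successive differences of P_{2^k}. If the series v(y) = Σ_{s ∈ F} g_s φ_s(y) converges unconditionally in L_∞(I^∞, V), then the double series Σ_{(k,s) ∈ ℤ₊ × F} δ_k(g_s) φ_s(y) converges unconditionally in L_∞(I^∞, V) to v. -/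
/-!
Since `Σ_{k ≤ n} δ_k = P_{2^n}`, moving `g_s` out of the `k = 0` term leaves the terms
`φ_s (δ_k g_s - [k = 0] g_s)`, of norm at most `2 C_D ‖g_s‖_W 2^{-α(k-1)}`. These bounds are
summable over `(k, s)`, so by the Weierstrass M-test the corrected terms converge uniformly and
unconditionally; their sum is `0` because each series over `k` telescopes to
`lim_n (P_{2^n} g_s - g_s) = 0`. The remaining terms `φ_s g_s`, placed on the slice `k = 0`,
converge to `v` by assumption.
-/

/-- The parametric domain `I^∞ = [-1,1]^ℕ`. -/
def Cube : Type := {y : ℕ → ℝ // ∀ j, |y j| ≤ 1}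

/-- Unconditional convergence of the series `Σ_i f_i` to `v` in the sup norm
(`L_∞(I^∞, V)`): for every `ε > 0` the partial sums over all large enough finite index
sets are uniformly within `ε` of `v`. -/
def UncondConv {ι Y V : Type*} [NormedAddCommGroup V] (f : ι → Y → V) (v : Y → V) : Prop :=
  ∀ ε : ℝ, 0 < ε → ∃ G₀ : Finset ι, ∀ G : Finset ι, G₀ ⊆ G →
    ∀ y : Y, ‖v y - ∑ i ∈ G, f i y‖ ≤ ε

open Filter Finset

section UncondConv

variable {ι κ Y V : Type*} [NormedAddCommGroup V]

theorem uncondConv_iff_tendstoUniformly {f : ι → Y → V} {v : Y → V} :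
    UncondConv f v ↔ TendstoUniformly (fun G y => ∑ i ∈ G, f i y) v atTop := by
  rw [Metric.tendstoUniformly_iff]
  refine ⟨fun h ε hε => ?_, fun h ε hε => ?_⟩
  · obtain ⟨G₀, hG₀⟩ := h (ε / 2) (half_pos hε)
    filter_upwards [eventually_ge_atTop G₀] with G hG y
    rw [dist_eq_norm]
    exact (hG₀ G hG y).trans_lt (half_lt_self hε)
  · obtain ⟨G₀, hG₀⟩ := eventually_atTop.mp (h ε hε)
    exact ⟨G₀, fun G hG y => by simpa only [dist_eq_norm] using (hG₀ G hG y).le⟩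

theorem UncondConv.add {f g : ι → Y → V} {v w : Y → V} (hf : UncondConv f v)
    (hg : UncondConv g w) : UncondConv (fun i y => f i y + g i y) (fun y => v y + w y) := by
  rw [uncondConv_iff_tendstoUniformly] at *
  simpa only [Pi.add_def, sum_add_distrib] using hf.add hg

theorem UncondConv.of_comp_injective {e : ι → κ} (he : Function.Injective e) {F : κ → Y → V}
    {v : Y → V} (hF : ∀ k ∉ Set.range e, F k = 0) (h : UncondConv (fun i => F (e i)) v) :
    UncondConv F v := by
  rw [uncondConv_iff_tendstoUniformly] at *
  refine fun u hu => (tendsto_finset_preimage_atTop_atTop he).eventually (h u hu) |>.mono ?_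
  intro G hG y
  simpa only [sum_preimage e G he.injOn (F · y) fun k _ hk => congrFun (hF k hk) y] using hG y

theorem uncondConv_of_norm_le [CompleteSpace V] {f : ι → Y → V} {v : Y → V} {u : ι → ℝ}
    (hu : Summable u) (hfu : ∀ i y, ‖f i y‖ ≤ u i) (hv : ∀ y, HasSum (f · y) (v y)) :
    UncondConv f v := by
  rw [uncondConv_iff_tendstoUniformly]
  convert tendstoUniformly_tsum hu hfu with y
  exact (hv y).tsum_eq.symm

end UncondConv

theorem Summable.hasSum_of_prod_fiberwise_right {β γ E : Type*} [NormedAddCommGroup E]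
    {f : β × γ → E} {g : γ → E} {a : E} (hf : Summable f)
    (hfg : ∀ c, HasSum (fun b => f (b, c)) (g c)) (hg : HasSum g a) : HasSum f a :=
  hg.unique (((Equiv.prodComm γ β).hasSum_iff.mpr hf.hasSum).prod_fiberwise hfg) ▸ hf.hasSum

theorem summable_pow_sub_one {r : ℝ} (hr0 : 0 ≤ r) (hr1 : r < 1) :
    Summable fun k : ℕ => r ^ (k - 1) :=
  (summable_nat_add_iff 1).mp (by simpa using summable_geometric_of_lt_one hr0 hr1)

section DyadicDifferences

variable {V : Type*} [NormedAddCommGroup V] {P δ : ℕ → V → V}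

theorem sum_range_succ_dyadic (hδ0 : ∀ v, δ 0 v = P 1 v)
    (hδ : ∀ k : ℕ, 1 ≤ k → ∀ v, δ k v = P (2 ^ k) v - P (2 ^ (k - 1)) v) (w : V) (n : ℕ) :
    ∑ k ∈ range (n + 1), δ k w = P (2 ^ n) w := by
  induction n with
  | zero => simp [hδ0]
  | succ n ih =>
    rw [sum_range_succ, ih, hδ (n + 1) n.succ_pos, Nat.add_sub_cancel, add_sub_cancel]

theorem norm_dyadic_sub_ite_le (hδ0 : ∀ v, δ 0 v = P 1 v)
    (hδ : ∀ k : ℕ, 1 ≤ k → ∀ v, δ k v = P (2 ^ k) v - P (2 ^ (k - 1)) v) {w : V} {B r : ℝ}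
    (hr0 : 0 ≤ r) (hr1 : r ≤ 1) (he : ∀ m, ‖w - P (2 ^ m) w‖ ≤ B * r ^ m) (k : ℕ) :
    ‖δ k w - (if k = 0 then w else 0)‖ ≤ 2 * B * r ^ (k - 1) := by
  have hB : 0 ≤ B := by simpa using (norm_nonneg _).trans (he 0)
  rcases k with _ | k
  · rw [if_pos rfl, hδ0, norm_sub_rev]
    simpa using (he 0).trans (by linarith)
  · rw [if_neg k.succ_ne_zero, sub_zero, hδ _ k.succ_pos, Nat.add_sub_cancel]
    calc ‖P (2 ^ (k + 1)) w - P (2 ^ k) w‖ = ‖(w - P (2 ^ k) w) - (w - P (2 ^ (k + 1)) w)‖ := by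
          congr 1; abel
      _ ≤ B * r ^ k + B * r ^ (k + 1) := (norm_sub_le _ _).trans (add_le_add (he k) (he (k + 1)))
      _ ≤ 2 * B * r ^ k := by
          nlinarith [mul_le_mul_of_nonneg_left (pow_le_pow_of_le_one hr0 hr1 (k.le_add_right 1)) hB]

theorem hasSum_dyadic_sub_ite (hδ0 : ∀ v, δ 0 v = P 1 v)
    (hδ : ∀ k : ℕ, 1 ≤ k → ∀ v, δ k v = P (2 ^ k) v - P (2 ^ (k - 1)) v) {w : V} {B r : ℝ}
    (hr0 : 0 ≤ r) (hr1 : r < 1) (he : ∀ m, ‖w - P (2 ^ m) w‖ ≤ B * r ^ m) :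
    HasSum (fun k => δ k w - if k = 0 then w else 0) 0 := by
  have hsum : Summable fun k => ‖δ k w - if k = 0 then w else 0‖ :=
    ((summable_pow_sub_one hr0 hr1).mul_left (2 * B)).of_nonneg_of_le (fun _ => norm_nonneg _)
      (norm_dyadic_sub_ite_le hδ0 hδ hr0 hr1.le he)
  rw [hasSum_iff_tendsto_nat_of_summable_norm hsum, ← tendsto_add_atTop_iff_nat 1]
  have hpartial (n : ℕ) :
      ∑ k ∈ range (n + 1), (δ k w - if k = 0 then w else 0) = P (2 ^ n) w - w := by
    simp [sum_sub_distrib, sum_range_succ_dyadic hδ0 hδ]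
  simp only [hpartial]
  refine squeeze_zero_norm (fun n => (norm_sub_rev _ _).trans_le (he n)) ?_
  simpa using (tendsto_pow_atTop_nhds_zero_of_lt_one hr0 hr1).const_mul B

theorem norm_sub_apply_two_pow_le {w : V} {C α N : ℝ}
    (h : ∀ n : ℕ, 1 ≤ n → ‖w - P n w‖ ≤ C * (n : ℝ) ^ (-α) * N) (m : ℕ) :
    ‖w - P (2 ^ m) w‖ ≤ C * N * ((2 : ℝ) ^ (-α)) ^ m := by
  have := h (2 ^ m) Nat.one_le_two_pow
  rw [Real.rpow_pow_comm zero_le_two]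
  push_cast at this
  linarith

end DyadicDifferences

theorem stmt6_general {V : Type*} [NormedAddCommGroup V] [NormedSpace ℝ V] [CompleteSpace V]
    (W : Set V) (normW : V → ℝ)
    (P : ℕ → V →L[ℝ] V) (α C_D : ℝ) (hα : 0 < α)
    (happrox : ∀ v ∈ W, ∀ n : ℕ, 1 ≤ n → ‖v - P n v‖ ≤ C_D * (n : ℝ) ^ (-α) * normW v)
    (δ : ℕ → V → V)
    (hδ0 : ∀ v, δ 0 v = P 1 v)
    (hδ : ∀ k : ℕ, 1 ≤ k → ∀ v, δ k v = P (2 ^ k) v - P (2 ^ (k - 1)) v)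
    (g : (ℕ →₀ ℕ) → V) (hg : ∀ s, g s ∈ W)
    (hgsum : Summable fun s : ℕ →₀ ℕ => normW (g s))
    (φ : (ℕ →₀ ℕ) → Cube → ℝ) (hφ : ∀ s y, |φ s y| ≤ 1)
    (v : Cube → V)
    (hconv : UncondConv (fun (s : ℕ →₀ ℕ) (y : Cube) => φ s y • g s) v) :
    UncondConv (fun (q : ℕ × (ℕ →₀ ℕ)) (y : Cube) => φ q.2 y • δ q.1 (g q.2)) v := by
  set r : ℝ := 2 ^ (-α)
  have hr0 : 0 ≤ r := by positivity
  have hr1 : r < 1 := Real.rpow_lt_one_of_one_lt_of_neg one_lt_two (neg_neg_of_pos hα)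
  have he (s : ℕ →₀ ℕ) (m : ℕ) : ‖g s - P (2 ^ m) (g s)‖ ≤ C_D * normW (g s) * r ^ m :=
    norm_sub_apply_two_pow_le (P := fun n => P n) (happrox (g s) (hg s)) m
  have hB (s : ℕ →₀ ℕ) : 0 ≤ 2 * (C_D * normW (g s)) := by
    simpa using (norm_nonneg _).trans (he s 0)
  set E : ℕ × (ℕ →₀ ℕ) → Cube → V :=
    fun q y => φ q.2 y • (δ q.1 (g q.2) - if q.1 = 0 then g q.2 else 0)
  have hEle (q : ℕ × (ℕ →₀ ℕ)) (y : Cube) :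
      ‖E q y‖ ≤ r ^ (q.1 - 1) * (2 * (C_D * normW (g q.2))) :=
    calc ‖E q y‖ ≤ ‖δ q.1 (g q.2) - if q.1 = 0 then g q.2 else 0‖ := by
          rw [norm_smul]
          exact mul_le_of_le_one_left (norm_nonneg _) (hφ _ _)
      _ ≤ 2 * (C_D * normW (g q.2)) * r ^ (q.1 - 1) :=
          norm_dyadic_sub_ite_le (P := fun n => P n) hδ0 hδ hr0 hr1.le (he q.2) q.1
      _ = _ := by ring
  have hu : Summable fun q : ℕ × (ℕ →₀ ℕ) => r ^ (q.1 - 1) * (2 * (C_D * normW (g q.2))) :=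
    (summable_pow_sub_one hr0 hr1).mul_of_nonneg ((hgsum.mul_left C_D).mul_left 2)
      (fun _ => by positivity) hB
  have hfiber (s : ℕ →₀ ℕ) (y : Cube) : HasSum (fun k => E (k, s) y) 0 := by
    simpa using ((hasSum_dyadic_sub_ite (P := fun n => P n) hδ0 hδ hr0 hr1 (he s)).const_smul
      (φ s y))
  have hE : UncondConv E 0 := uncondConv_of_norm_le hu hEle fun y =>
    (hu.of_norm_bounded (hEle · y)).hasSum_of_prod_fiberwise_right (hfiber · y) hasSum_zero
  have h0 : UncondConv (fun (q : ℕ × (ℕ →₀ ℕ)) y => if q.1 = 0 then φ q.2 y • g q.2 else 0) v :=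
    UncondConv.of_comp_injective (Prod.mk_right_injective 0)
      (fun ⟨k, s⟩ hks => funext fun y => if_neg fun hk => hks ⟨s, Prod.ext hk.symm rfl⟩)
      (by simpa using hconv)
  convert h0.add hE using 1
  · ext ⟨k, s⟩ y
    by_cases hk : k = 0 <;> simp [E, smul_sub, hk]
  · simp

/-- if `v(y) = Σ_{s∈F} g_s φ_s(y)` converges unconditionally in `L_∞(I^∞,V)`,
`(‖g_s‖_W) ∈ ℓ_1(F)`, `‖φ_s‖_∞ ≤ 1`, and the operators `P_n` satisfy the approximation
property on `W`, then the double series `Σ_{(k,s)} δ_k(g_s) φ_s` converges unconditionally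
in `L_∞(I^∞,V)` to `v`. -/
theorem stmt6 {V : Type*} [NormedAddCommGroup V] [NormedSpace ℝ V] [CompleteSpace V]
    (W : Set V) (normW : V → ℝ)
    (P : ℕ → V →L[ℝ] V) (α C_D : ℝ) (hα : 0 < α) (hCD : 0 ≤ C_D)
    (happrox : ∀ v ∈ W, ∀ n : ℕ, 1 ≤ n → ‖v - P n v‖ ≤ C_D * (n : ℝ) ^ (-α) * normW v)
    (δ : ℕ → V → V)
    (hδ0 : ∀ v, δ 0 v = P 1 v)
    (hδ : ∀ k : ℕ, 1 ≤ k → ∀ v, δ k v = P (2 ^ k) v - P (2 ^ (k - 1)) v)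
    (g : (ℕ →₀ ℕ) → V) (hg : ∀ s, g s ∈ W)
    (hgsum : Summable fun s : ℕ →₀ ℕ => normW (g s))
    (φ : (ℕ →₀ ℕ) → Cube → ℝ) (hφ : ∀ s y, |φ s y| ≤ 1)
    (v : Cube → V)
    (hconv : UncondConv (fun (s : ℕ →₀ ℕ) (y : Cube) => φ s y • g s) v) :
    UncondConv (fun (q : ℕ × (ℕ →₀ ℕ)) (y : Cube) => φ q.2 y • δ q.1 (g q.2)) v :=
  stmt6_general W normW P α C_D hα happrox δ hδ0 hδ g hg hgsum φ hφ v hconv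
end

section
/- Let a be uniformly elliptic with 0 < r < a(x,y) for all x ∈ D, y ∈ I^∞, affinely dependent: a(y) = ā + Σ_j y_j ψ_j with ψ_j ∈ L_∞(D). Then the partial derivatives of the solution map y ↦ u(y) ∈ V = H_0^1(D) satisfy ‖∂_y^s u‖_{L_∞(I^∞, V)} ≤ |s|! b^s · ‖f‖_{V*}/r for all s ∈ F, where b_j = ‖ψ_j‖_{L_∞(D)}/r. -/
/-!
Testing the derivative recursion with `v = ∂_y^s u` and combining coercivity of `B y` with the
bounds on the forms `ψB j` gives `‖∂_y^s u‖ ≤ Σ_j s_j b_j ‖∂_y^{s-e_j} u‖`. Induction on `|s|` then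
closes the estimate: each summand is at most `s_j (|s|-1)! b^s ‖f‖/r`, and `Σ_j s_j = |s|`.
-/

open scoped Nat

namespace Finsupp

variable {σ : Type*}

lemma tsub_single_one_add_single_one {s : σ →₀ ℕ} {j : σ} (hj : j ∈ s.support) :
    s - single j 1 + single j 1 = s :=
  tsub_add_cancel_of_le (single_le_iff.2 (Nat.one_le_iff_ne_zero.2 (mem_support_iff.1 hj)))

lemma degree_tsub_single_one_add_one {s : σ →₀ ℕ} {j : σ} (hj : j ∈ s.support) :
    degree (s - single j 1) + 1 = degree s := by
  conv_rhs => rw [← tsub_single_one_add_single_one hj]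
  rw [map_add, degree_single]

lemma prod_pow_tsub_single_one_mul {M : Type*} [CommMonoid M] (b : σ → M) {s : σ →₀ ℕ} {j : σ}
    (hj : j ∈ s.support) :
    (s - single j 1).prod (fun k n => b k ^ n) * b j = s.prod fun k n => b k ^ n := by
  conv_rhs => rw [← tsub_single_one_add_single_one hj]
  rw [prod_add_index' (fun _ => pow_zero _) (fun _ _ _ => pow_add _ _ _),
    prod_single_index (h := fun k n => b k ^ n) (pow_zero _), pow_one]

theorem le_factorial_degree_mul_prod_pow {x : (σ →₀ ℕ) → ℝ} {b : σ → ℝ} {C : ℝ}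
    (hb : ∀ j, 0 ≤ b j) (h0 : x 0 ≤ C)
    (hstep : ∀ s ≠ 0, x s ≤ ∑ j ∈ s.support, (s j : ℝ) * b j * x (s - single j 1))
    (s : σ →₀ ℕ) :
    x s ≤ (degree s)! * (s.prod fun j n => b j ^ n) * C := by
  induction hn : degree s generalizing s with
  | zero => simpa [(degree_eq_zero_iff s).1 hn] using h0
  | succ n ih =>
    have hs : s ≠ 0 := by rintro rfl; simp at hn
    have hterm : ∀ j ∈ s.support, (s j : ℝ) * b j * x (s - single j 1) ≤
        s j * (n ! * (s.prod fun j n => b j ^ n) * C) := by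
      intro j hj
      have hdeg : degree (s - single j 1) = n := by
        have := degree_tsub_single_one_add_one hj
        omega
      calc (s j : ℝ) * b j * x (s - single j 1)
          ≤ s j * b j * (n ! * ((s - single j 1).prod fun j n => b j ^ n) * C) := by
            gcongr
            · exact mul_nonneg (Nat.cast_nonneg _) (hb j)
            · exact ih _ hdeg
        _ = s j * (n ! * (((s - single j 1).prod fun j n => b j ^ n) * b j) * C) := by ring
        _ = s j * (n ! * (s.prod fun j n => b j ^ n) * C) := by
            rw [prod_pow_tsub_single_one_mul b hj]
    calc x s ≤ ∑ j ∈ s.support, (s j : ℝ) * b j * x (s - single j 1) := hstep s hs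
      _ ≤ ∑ j ∈ s.support, (s j : ℝ) * (n ! * (s.prod fun j n => b j ^ n) * C) :=
        Finset.sum_le_sum hterm
      _ = (n + 1 : ℕ)! * (s.prod fun j n => b j ^ n) * C := by
        rw [← Finset.sum_mul, ← Nat.cast_sum, ← degree_apply, hn, Nat.factorial_succ]
        push_cast
        ring

end Finsupp

theorem norm_le_sum_of_coercive_of_eq_neg_sum {V ι : Type*} [SeminormedAddCommGroup V]
    {r : ℝ} (hr : 0 < r) {β : V → V → ℝ} {ψ : ι → V → V → ℝ} {b c : ι → ℝ} {S : Finset ι}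
    (hb : ∀ j, 0 ≤ b j) (hc : ∀ j, 0 ≤ c j)
    (hcoer : ∀ v, r * ‖v‖ ^ 2 ≤ β v v) (hψ : ∀ j v w, |ψ j v w| ≤ r * b j * ‖v‖ * ‖w‖)
    {u : V} {w : ι → V} (hu : β u u = -∑ j ∈ S, c j * ψ j (w j) u) :
    ‖u‖ ≤ ∑ j ∈ S, c j * b j * ‖w j‖ := by
  set M := ∑ j ∈ S, c j * b j * ‖w j‖
  have hM : 0 ≤ M := Finset.sum_nonneg fun j _ => by have := hb j; have := hc j; positivity
  have key : r * ‖u‖ ^ 2 ≤ r * M * ‖u‖ :=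
    calc r * ‖u‖ ^ 2 ≤ β u u := hcoer u
      _ = -∑ j ∈ S, c j * ψ j (w j) u := hu
      _ ≤ ∑ j ∈ S, |c j * ψ j (w j) u| := (neg_le_abs _).trans (Finset.abs_sum_le_sum_abs _ _)
      _ ≤ ∑ j ∈ S, c j * (r * b j * ‖w j‖ * ‖u‖) := by
        gcongr with j
        rw [abs_mul, abs_of_nonneg (hc j)]
        exact mul_le_mul_of_nonneg_left (hψ j _ _) (hc j)
      _ = r * M * ‖u‖ := by
        rw [Finset.mul_sum, Finset.sum_mul]
        exact Finset.sum_congr rfl fun j _ => by ring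
  by_contra! hlt
  nlinarith [mul_lt_mul_of_pos_left hlt (mul_pos hr (hM.trans_lt hlt))]

/-- `B y` is the bilinear form `(u,v) ↦ ∫_D a(y)∇u·∇v` (coercive with constant `r` by uniform
ellipticity), `ψB j` is `(u,v) ↦ ∫_D ψ_j ∇u·∇v` (bounded by `‖ψ_j‖_{L_∞} = r b_j`), `U s y` is
`∂_y^s u(y)` and `Cf = ‖f‖_{V*}`. -/
theorem stmt9_general {V Y : Type*} [NormedAddCommGroup V]
    (r Cf : ℝ) (hr : 0 < r)
    (b : ℕ → ℝ) (hb : ∀ j, 0 ≤ b j)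
    (B : Y → V → V → ℝ) (ψB : ℕ → V → V → ℝ)
    (hcoer : ∀ y : Y, ∀ v : V, r * ‖v‖ ^ 2 ≤ B y v v)
    (hψ : ∀ j : ℕ, ∀ v w : V, |ψB j v w| ≤ r * b j * ‖v‖ * ‖w‖)
    (U : (ℕ →₀ ℕ) → Y → V)
    (hU0 : ∀ y : Y, ‖U 0 y‖ ≤ Cf / r)
    (hrec : ∀ s : ℕ →₀ ℕ, s ≠ 0 → ∀ y : Y, ∀ v : V,
      B y (U s y) v =
        -∑ j ∈ s.support, (s j : ℝ) * ψB j (U (s - Finsupp.single j 1) y) v) :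
    ∀ s : ℕ →₀ ℕ, ∀ y : Y,
      ‖U s y‖ ≤ (Nat.factorial (s.sum fun _ n => n) : ℝ) *
        (∏ j ∈ s.support, b j ^ s j) * (Cf / r) := by
  intro s y
  have hstep : ∀ s ≠ 0, ‖U s y‖ ≤
      ∑ j ∈ s.support, (s j : ℝ) * b j * ‖U (s - Finsupp.single j 1) y‖ := fun s hs =>
    norm_le_sum_of_coercive_of_eq_neg_sum (c := fun j => (s j : ℝ))
      (w := fun j => U (s - Finsupp.single j 1) y) hr hb (fun _ => Nat.cast_nonneg _)
      (hcoer y) hψ (hrec s hs y _)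
  exact Finsupp.le_factorial_degree_mul_prod_pow hb (hU0 y) hstep s

/-- estimate `‖∂_y^s u‖_{L_∞(I^∞,V)} ≤ |s|! b^s ‖f‖_{V*}/r` for the parametric
derivatives of the solution map of the affine-parametric elliptic problem.  The problem is
encoded through its variational structure: `B y` is the parametric bilinear form
`(u,v) ↦ ∫_D a(y)∇u·∇v` (coercive with constant `r` by uniform ellipticity `0 < r < a`),
`ψB j` is the form `(u,v) ↦ ∫_D ψ_j ∇u·∇v` (bounded by `‖ψ_j‖_{L_∞} = r b_j`), `U s y`
is `∂_y^s u(y)`, `Cf = ‖f‖_{V*}`, and the derivatives obey the recursion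
`B(y)(∂_y^s u, v) = -Σ_{j : s_j ≠ 0} s_j ψB_j(∂_y^{s-e_j} u, v)`. -/
theorem stmt9 {V Y : Type*} [NormedAddCommGroup V] [NormedSpace ℝ V]
    (r Cf : ℝ) (hr : 0 < r) (hCf : 0 ≤ Cf)
    (b : ℕ → ℝ) (hb : ∀ j, 0 ≤ b j)
    (B : Y → V → V → ℝ) (ψB : ℕ → V → V → ℝ)
    (hcoer : ∀ y : Y, ∀ v : V, r * ‖v‖ ^ 2 ≤ B y v v)
    (hψ : ∀ j : ℕ, ∀ v w : V, |ψB j v w| ≤ r * b j * ‖v‖ * ‖w‖)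
    (U : (ℕ →₀ ℕ) → Y → V)
    (hU0 : ∀ y : Y, ‖U 0 y‖ ≤ Cf / r)
    (hrec : ∀ s : ℕ →₀ ℕ, s ≠ 0 → ∀ y : Y, ∀ v : V,
      B y (U s y) v =
        -∑ j ∈ s.support, (s j : ℝ) * ψB j (U (s - Finsupp.single j 1) y) v) :
    ∀ s : ℕ →₀ ℕ, ∀ y : Y,
      ‖U s y‖ ≤ (Nat.factorial (s.sum fun _ n => n) : ℝ) *
        (∏ j ∈ s.support, b j ^ s j) * (Cf / r) :=
  stmt9_general r Cf hr b hb B ψB hcoer hψ U hU0 hrec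
end

section
/- Let (λ_k)_{k ∈ ℤ₊} be the Lebesgue constants of univariate Lagrange interpolation operators I_k at nested nodes, and suppose λ_k ≤ (k+1)^θ for all k for some θ ≥ 1. Then for every finite lower (downward closed) set Λ ⊂ F, the Lebesgue constant of the tensorized sparse interpolation operator I_Λ = Σ_{s ∈ Λ} ⊗_j (I_{s_j} - I_{s_j - 1}) satisfies L_Λ ≤ |Λ|^{θ+1}. -/
/-- The `j`-th Lagrange fundamental polynomial for the nodes `ξ_0, …, ξ_k`. -/
noncomputable def lagb (ξ : ℕ → ℝ) (k j : ℕ) (t : ℝ) : ℝ :=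
  ∏ i ∈ (Finset.range (k + 1)).erase j, (t - ξ i) / (ξ j - ξ i)

/-- The univariate Lagrange interpolation operator `I_k` applied in coordinate `j`
of a function on `ℝ^ℕ`. -/
noncomputable def Iuni (ξ : ℕ → ℝ) (k j : ℕ) (f : (ℕ → ℝ) → ℝ) : (ℕ → ℝ) → ℝ :=
  fun y => ∑ i ∈ Finset.range (k + 1), f (Function.update y j (ξ i)) * lagb ξ k i (y j)

/-- The difference operator `Δ_k = I_k - I_{k-1}` (with `I_{-1} = 0`, so `Δ_0 = I_0`)
applied in coordinate `j`. -/
noncomputable def deltaCoord (ξ : ℕ → ℝ) (k j : ℕ) (f : (ℕ → ℝ) → ℝ) : (ℕ → ℝ) → ℝ :=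
  if k = 0 then Iuni ξ 0 j f else Iuni ξ k j f - Iuni ξ (k - 1) j f

/-- The tensorized difference operator `Δ_s = ⊗_j Δ_{s_j}` (the commuting coordinatewise
difference operators composed over the support of the multi-index `s`). -/
noncomputable def deltaTensor (ξ : ℕ → ℝ) (s : ℕ →₀ ℕ) (f : (ℕ → ℝ) → ℝ) : (ℕ → ℝ) → ℝ :=
  (s.support.sort (· ≤ ·)).foldr (fun j g => deltaCoord ξ (s j) j g) f

/-!
Write `D_σ(k) = (k+1)^σ - k^σ`. For `θ ≥ 1` the univariate bound `λ_k ≤ (k+1)^θ` gives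
`‖Δ_k‖ ≤ λ_k + λ_{k-1} ≤ (k+1)^θ + k^θ ≤ D_{θ+1}(k)`, so it suffices to show
`∑_{s ∈ Λ} ∏_j D_σ(s_j) ≤ |Λ|^σ` for every finite lower set `Λ` and every `σ ≥ 1`.
This goes by induction on the number of coordinates: slicing `Λ` along the last coordinate gives
nested lower sets `Λ_0 ⊇ Λ_1 ⊇ ⋯` in fewer coordinates, and the induction step reduces to
`∑_k D_σ(k) n_k^σ ≤ (∑_k n_k)^σ` for nonincreasing `n_k`. Since `n_0 + ⋯ + n_{k-1} ≥ k n_k`, each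
new term is bounded by an increment of the convex function `t ↦ t^σ`.
-/

open Finset

theorem ConvexOn.map_add_sub_map_le_of_le {s : Set ℝ} {f : ℝ → ℝ} (hf : ConvexOn ℝ s f)
    {x y b : ℝ} (hx : x ∈ s) (hyb : y + b ∈ s) (hxy : x ≤ y) (hb : 0 ≤ b) :
    f (x + b) - f x ≤ f (y + b) - f y := by
  rcases hb.eq_or_lt with rfl | hb
  · simp
  have hxb : x + b ∈ s := hf.1.ordConnected.out hx hyb ⟨by linarith, by linarith⟩
  have hy : y ∈ s := hf.1.ordConnected.out hx hyb ⟨hxy, by linarith⟩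
  have h₁ : slope f x (x + b) ≤ slope f x (y + b) :=
    hf.slope_mono hx ⟨hxb, (lt_add_of_pos_right x hb).ne'⟩ ⟨hyb, (by linarith : x < y + b).ne'⟩
      (by linarith)
  have h₂ : slope f (y + b) x ≤ slope f (y + b) y :=
    hf.slope_mono hyb ⟨hx, (by linarith : x < y + b).ne⟩ ⟨hy, (lt_add_of_pos_right y hb).ne⟩ hxy
  rw [slope_comm f x (y + b)] at h₁
  have h := h₁.trans h₂
  rwa [slope_def_field, slope_def_field, add_sub_cancel_left, sub_add_cancel_left, div_neg,
    ← neg_div, neg_sub, div_le_div_iff_of_pos_right hb] at h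

noncomputable def powDiff (σ : ℝ) (k : ℕ) : ℝ := ((k : ℝ) + 1) ^ σ - (k : ℝ) ^ σ

variable {σ : ℝ}

lemma powDiff_nonneg (hσ : 0 ≤ σ) (k : ℕ) : 0 ≤ powDiff σ k :=
  sub_nonneg.2 (Real.rpow_le_rpow k.cast_nonneg (by linarith) hσ)

lemma powDiff_zero (hσ : σ ≠ 0) : powDiff σ 0 = 1 := by
  simp [powDiff, Real.zero_rpow hσ]

theorem sum_powDiff_mul_rpow_le (hσ : 1 ≤ σ) {a : ℕ → ℝ} (ha : 0 ≤ a) (hanti : Antitone a)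
    (M : ℕ) : ∑ k ∈ range M, powDiff σ k * a k ^ σ ≤ (∑ k ∈ range M, a k) ^ σ := by
  induction M with
  | zero => simp [Real.zero_rpow (by linarith : σ ≠ 0)]
  | succ M ih =>
    set A := ∑ k ∈ range M, a k
    have hMA : M * a M ≤ A := by
      simpa using card_nsmul_le_sum (range M) a (a M) fun k hk => hanti (mem_range.1 hk).le
    have step : powDiff σ M * a M ^ σ ≤ (A + a M) ^ σ - A ^ σ := by
      have h := (convexOn_rpow hσ).map_add_sub_map_le_of_le (mul_nonneg M.cast_nonneg (ha M))
        (add_nonneg (sum_nonneg fun k _ => ha k) (ha M)) hMA (ha M)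
      rwa [← add_one_mul, Real.mul_rpow (by positivity) (ha M), Real.mul_rpow M.cast_nonneg (ha M),
        ← sub_mul] at h
    rw [sum_range_succ, sum_range_succ]
    linarith

section LowerSets

variable {Λ : Finset (ℕ →₀ ℕ)}

def IsLower (Λ : Finset (ℕ →₀ ℕ)) : Prop :=
  ∀ s ∈ Λ, ∀ j : ℕ, 0 < s j → s - Finsupp.single j 1 ∈ Λ

noncomputable def coordSlice (Λ : Finset (ℕ →₀ ℕ)) (N k : ℕ) : Finset (ℕ →₀ ℕ) :=
  (Λ.filter fun s => s N = k).image (Finsupp.erase N)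

lemma mem_coordSlice {N k : ℕ} {t : ℕ →₀ ℕ} :
    t ∈ coordSlice Λ N k ↔ ∃ s ∈ Λ, s N = k ∧ s.erase N = t := by
  simp [coordSlice, and_assoc]

lemma injOn_erase_of_apply_eq (N k : ℕ) :
    Set.InjOn (Finsupp.erase N) {s : ℕ →₀ ℕ | s N = k} := by
  intro s hs t ht hst
  ext j
  rcases eq_or_ne j N with rfl | hj
  · exact hs.trans ht.symm
  · simpa [Finsupp.erase_ne hj] using DFunLike.congr_fun hst j

lemma sum_eq_sum_sum_coordSlice {β : Type*} [AddCommMonoid β] {N M : ℕ}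
    (hM : ∀ s ∈ Λ, s N < M) (g : ℕ → (ℕ →₀ ℕ) → β) :
    ∑ s ∈ Λ, g (s N) (s.erase N) = ∑ k ∈ range M, ∑ t ∈ coordSlice Λ N k, g k t := by
  rw [← sum_fiberwise_of_maps_to (fun s hs => mem_range.2 (hM s hs))]
  refine sum_congr rfl fun k _ => ?_
  rw [coordSlice, sum_image]
  · exact sum_congr rfl fun s hs => by rw [(mem_filter.1 hs).2]
  · exact fun s hs t ht => injOn_erase_of_apply_eq N k (mem_filter.1 hs).2 (mem_filter.1 ht).2

lemma card_eq_sum_card_coordSlice {N M : ℕ} (hM : ∀ s ∈ Λ, s N < M) :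
    #Λ = ∑ k ∈ range M, #(coordSlice Λ N k) := by
  simpa only [card_eq_sum_ones] using sum_eq_sum_sum_coordSlice hM fun _ _ => 1

lemma isLower_coordSlice (hΛ : IsLower Λ) (N k : ℕ) :
    IsLower (coordSlice Λ N k) := by
  intro t ht j hj
  obtain ⟨s, hs, hsN, rfl⟩ := mem_coordSlice.1 ht
  have hjN : j ≠ N := by rintro rfl; simp at hj
  rw [Finsupp.erase_ne hjN] at hj
  refine mem_coordSlice.2 ⟨s - Finsupp.single j 1, hΛ s hs j hj,
    by simpa [Finsupp.single_apply, hjN] using hsN, ?_⟩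
  ext i
  rcases eq_or_ne i N with rfl | hi
  · simp
  · simp [Finsupp.erase_ne hi]

lemma coordSlice_succ_subset (hΛ : IsLower Λ) (N k : ℕ) :
    coordSlice Λ N (k + 1) ⊆ coordSlice Λ N k := by
  intro t ht
  obtain ⟨s, hs, hsN, rfl⟩ := mem_coordSlice.1 ht
  refine mem_coordSlice.2 ⟨s - Finsupp.single N 1, hΛ s hs N (by omega), by simp [hsN], ?_⟩
  ext i
  rcases eq_or_ne i N with rfl | hi
  · simp
  · simp [Finsupp.erase_ne hi, Ne.symm hi]

lemma support_subset_range_of_mem_coordSlice {N k : ℕ}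
    (hΛ : ∀ s ∈ Λ, s.support ⊆ range (N + 1)) :
    ∀ t ∈ coordSlice Λ N k, t.support ⊆ range N := by
  intro t ht j hj
  obtain ⟨s, hs, -, rfl⟩ := mem_coordSlice.1 ht
  rw [Finsupp.support_erase, mem_erase] at hj
  have := mem_range.1 (hΛ s hs hj.2)
  exact mem_range.2 (by omega)

theorem sum_prod_range_powDiff_le (hσ : 1 ≤ σ) (N : ℕ) (hΛ : IsLower Λ)
    (hsupp : ∀ s ∈ Λ, s.support ⊆ range N) :
    ∑ s ∈ Λ, ∏ j ∈ range N, powDiff σ (s j) ≤ (#Λ : ℝ) ^ σ := by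
  induction N generalizing Λ with
  | zero =>
    rcases (#Λ).eq_zero_or_pos with h | h
    · simp [h, Real.zero_rpow (by linarith : σ ≠ 0)]
    · simpa using Real.self_le_rpow_of_one_le (Nat.one_le_cast.2 h) hσ
  | succ N ih =>
    set M := Λ.sup (fun s => s N) + 1
    have hM : ∀ s ∈ Λ, s N < M := fun s hs => Nat.lt_succ_of_le (le_sup (f := fun s => s N) hs)
    have hsplit : ∀ s : ℕ →₀ ℕ, ∏ j ∈ range (N + 1), powDiff σ (s j)
        = powDiff σ (s N) * ∏ j ∈ range N, powDiff σ (s.erase N j) := fun s => by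
      rw [prod_range_succ, mul_comm]
      congr 1
      exact prod_congr rfl fun j hj => by rw [Finsupp.erase_ne (mem_range.1 hj).ne]
    calc ∑ s ∈ Λ, ∏ j ∈ range (N + 1), powDiff σ (s j)
        = ∑ k ∈ range M, powDiff σ k * ∑ t ∈ coordSlice Λ N k, ∏ j ∈ range N, powDiff σ (t j) := by
          simp only [hsplit, mul_sum]
          exact sum_eq_sum_sum_coordSlice hM fun k t => powDiff σ k * ∏ j ∈ range N, powDiff σ (t j)
      _ ≤ ∑ k ∈ range M, powDiff σ k * (#(coordSlice Λ N k) : ℝ) ^ σ :=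
          sum_le_sum fun k _ => mul_le_mul_of_nonneg_left
            (ih (isLower_coordSlice hΛ N k) (support_subset_range_of_mem_coordSlice hsupp))
            (powDiff_nonneg (by linarith) k)
      _ ≤ (∑ k ∈ range M, (#(coordSlice Λ N k) : ℝ)) ^ σ :=
          sum_powDiff_mul_rpow_le hσ (a := fun k => #(coordSlice Λ N k))
            (fun k => Nat.cast_nonneg _) (antitone_nat_of_succ_le fun k =>
              Nat.cast_le.2 (card_le_card (coordSlice_succ_subset hΛ N k))) M
      _ = (#Λ : ℝ) ^ σ := by rw [card_eq_sum_card_coordSlice hM, Nat.cast_sum]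

theorem sum_prod_powDiff_le (hσ : 1 ≤ σ) (hΛ : IsLower Λ) :
    ∑ s ∈ Λ, ∏ j ∈ s.support, powDiff σ (s j) ≤ (#Λ : ℝ) ^ σ := by
  obtain ⟨N, hN⟩ := exists_nat_subset_range (Λ.biUnion Finsupp.support)
  have hsupp : ∀ s ∈ Λ, s.support ⊆ range N := fun s hs => (subset_biUnion_of_mem _ hs).trans hN
  refine (sum_congr rfl fun s hs => ?_).trans_le (sum_prod_range_powDiff_le hσ N hΛ hsupp)
  refine prod_subset (hsupp s hs) fun j _ hj => ?_
  rw [Finsupp.notMem_support_iff.1 hj, powDiff_zero (by linarith)]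

end LowerSets

noncomputable def deltaBound (θ : ℝ) (k : ℕ) : ℝ := ((k : ℝ) + 1) ^ θ + (k : ℝ) ^ θ

lemma deltaBound_nonneg (θ : ℝ) (k : ℕ) : 0 ≤ deltaBound θ k := by
  unfold deltaBound; positivity

lemma deltaBound_le_powDiff {θ : ℝ} (hθ : 1 ≤ θ) (k : ℕ) :
    deltaBound θ k ≤ powDiff (θ + 1) k := by
  set a : ℝ := (k : ℝ)
  have ha : 0 ≤ a := k.cast_nonneg
  have key : a ^ θ * (a + 1) ≤ (a + 1) ^ θ * a := by
    rcases ha.eq_or_lt with h | h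
    · simp [← h, Real.zero_rpow (by linarith : θ ≠ 0)]
    · have hmono : a ^ (θ - 1) ≤ (a + 1) ^ (θ - 1) :=
        Real.rpow_le_rpow ha (by linarith) (by linarith)
      calc a ^ θ * (a + 1) = a ^ (θ - 1) * (a + 1) * a := by
            conv_lhs => rw [← sub_add_cancel θ 1, Real.rpow_add_one h.ne']
            ring
        _ ≤ (a + 1) ^ (θ - 1) * (a + 1) * a := by gcongr
        _ = (a + 1) ^ θ * a := by rw [← Real.rpow_add_one (by linarith), sub_add_cancel]
  rw [deltaBound, powDiff, Real.rpow_add_one (by linarith), Real.rpow_add_one' ha (by linarith)]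
  linarith

def cube : Set (ℕ → ℝ) := {y | ∀ j, |y j| ≤ 1}

lemma update_mem_cube {y : ℕ → ℝ} (hy : y ∈ cube) (j : ℕ) {t : ℝ} (ht : |t| ≤ 1) :
    Function.update y j t ∈ cube := by
  intro i
  rcases eq_or_ne i j with rfl | h
  · simpa
  · simpa [Function.update_of_ne h] using hy i

variable {ξ : ℕ → ℝ} {θ : ℝ}

lemma abs_Iuni_le (hξ : ∀ i, |ξ i| ≤ 1) {k : ℕ} {L : ℝ}
    (hleb : ∀ t ∈ Set.Icc (-1 : ℝ) 1, ∑ i ∈ range (k + 1), |lagb ξ k i t| ≤ L) (j : ℕ)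
    {g : (ℕ → ℝ) → ℝ} {C : ℝ} (hg : ∀ y ∈ cube, |g y| ≤ C) {y : ℕ → ℝ} (hy : y ∈ cube) :
    |Iuni ξ k j g y| ≤ L * C := by
  have hC : 0 ≤ C := (abs_nonneg _).trans (hg 0 fun _ => by simp)
  unfold Iuni
  calc |∑ i ∈ range (k + 1), g (Function.update y j (ξ i)) * lagb ξ k i (y j)|
      ≤ ∑ i ∈ range (k + 1), |g (Function.update y j (ξ i))| * |lagb ξ k i (y j)| := by
        simpa only [abs_mul] using abs_sum_le_sum_abs
          (fun i => g (Function.update y j (ξ i)) * lagb ξ k i (y j)) (range (k + 1))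
    _ ≤ ∑ i ∈ range (k + 1), C * |lagb ξ k i (y j)| :=
        sum_le_sum fun i _ => by gcongr; exact hg _ (update_mem_cube hy j (hξ i))
    _ ≤ C * L := by
        rw [← mul_sum]
        exact mul_le_mul_of_nonneg_left (hleb _ (abs_le.1 (hy j))) hC
    _ = L * C := mul_comm C L

lemma abs_deltaCoord_le (hξ : ∀ i, |ξ i| ≤ 1)
    (hleb : ∀ k : ℕ, ∀ t ∈ Set.Icc (-1 : ℝ) 1,
      ∑ i ∈ range (k + 1), |lagb ξ k i t| ≤ ((k : ℝ) + 1) ^ θ) (k j : ℕ)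
    {g : (ℕ → ℝ) → ℝ} {C : ℝ} (hg : ∀ y ∈ cube, |g y| ≤ C) {y : ℕ → ℝ} (hy : y ∈ cube) :
    |deltaCoord ξ k j g y| ≤ deltaBound θ k * C := by
  have hC : 0 ≤ C := (abs_nonneg _).trans (hg 0 fun _ => by simp)
  cases k with
  | zero =>
    calc |deltaCoord ξ 0 j g y| ≤ ((0 : ℕ) + 1 : ℝ) ^ θ * C := abs_Iuni_le hξ (hleb 0) j hg hy
      _ ≤ deltaBound θ 0 * C := by
        gcongr
        exact le_add_of_nonneg_right (Real.rpow_nonneg (Nat.cast_nonneg 0) θ)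
  | succ m =>
    calc |deltaCoord ξ (m + 1) j g y| = |Iuni ξ (m + 1) j g y - Iuni ξ m j g y| := by
          simp [deltaCoord]
      _ ≤ |Iuni ξ (m + 1) j g y| + |Iuni ξ m j g y| := abs_sub _ _
      _ ≤ (((m + 1 : ℕ) : ℝ) + 1) ^ θ * C + ((m : ℝ) + 1) ^ θ * C :=
          add_le_add (abs_Iuni_le hξ (hleb (m + 1)) j hg hy) (abs_Iuni_le hξ (hleb m) j hg hy)
      _ = deltaBound θ (m + 1) * C := by
          rw [deltaBound, Nat.cast_succ]
          ring

lemma abs_foldr_deltaCoord_le (hξ : ∀ i, |ξ i| ≤ 1)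
    (hleb : ∀ k : ℕ, ∀ t ∈ Set.Icc (-1 : ℝ) 1,
      ∑ i ∈ range (k + 1), |lagb ξ k i t| ≤ ((k : ℝ) + 1) ^ θ) (s : ℕ →₀ ℕ) (l : List ℕ)
    {g : (ℕ → ℝ) → ℝ} {C : ℝ} (hg : ∀ y ∈ cube, |g y| ≤ C) {y : ℕ → ℝ} (hy : y ∈ cube) :
    |l.foldr (fun j h => deltaCoord ξ (s j) j h) g y|
      ≤ (l.map fun j => deltaBound θ (s j)).prod * C := by
  induction l generalizing y with
  | nil => simpa using hg y hy
  | cons j l ih =>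
    simpa only [List.foldr_cons, List.map_cons, List.prod_cons, mul_assoc] using
      abs_deltaCoord_le hξ hleb (s j) j (fun z hz => ih hz) hy

lemma abs_deltaTensor_le (hξ : ∀ i, |ξ i| ≤ 1)
    (hleb : ∀ k : ℕ, ∀ t ∈ Set.Icc (-1 : ℝ) 1,
      ∑ i ∈ range (k + 1), |lagb ξ k i t| ≤ ((k : ℝ) + 1) ^ θ) (s : ℕ →₀ ℕ)
    {f : (ℕ → ℝ) → ℝ} (hf : ∀ y ∈ cube, |f y| ≤ 1) {y : ℕ → ℝ} (hy : y ∈ cube) :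
    |deltaTensor ξ s f y| ≤ ∏ j ∈ s.support, deltaBound θ (s j) := by
  have h := abs_foldr_deltaCoord_le hξ hleb s (s.support.sort (· ≤ ·)) hf hy
  rwa [mul_one, ((sort_perm_toList _ _).map _).prod_eq, prod_map_toList] at h

theorem stmt11_general (ξ : ℕ → ℝ) (hξ : ∀ j, |ξ j| ≤ 1)
    (θ : ℝ) (hθ : 1 ≤ θ)
    (hleb : ∀ k : ℕ, ∀ t ∈ Set.Icc (-1 : ℝ) 1,
      ∑ j ∈ Finset.range (k + 1), |lagb ξ k j t| ≤ ((k : ℝ) + 1) ^ θ)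
    (Λ : Finset (ℕ →₀ ℕ))
    (hlow : ∀ s ∈ Λ, ∀ j : ℕ, 0 < s j → s - Finsupp.single j 1 ∈ Λ)
    (f : (ℕ → ℝ) → ℝ) (hf : ∀ y : ℕ → ℝ, (∀ j, |y j| ≤ 1) → |f y| ≤ 1) :
    ∀ y : ℕ → ℝ, (∀ j, |y j| ≤ 1) →
      |∑ s ∈ Λ, deltaTensor ξ s f y| ≤ (Λ.card : ℝ) ^ (θ + 1) := by
  intro y hy
  calc |∑ s ∈ Λ, deltaTensor ξ s f y|
      ≤ ∑ s ∈ Λ, |deltaTensor ξ s f y| := abs_sum_le_sum_abs _ _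
    _ ≤ ∑ s ∈ Λ, ∏ j ∈ s.support, deltaBound θ (s j) :=
        sum_le_sum fun s _ => abs_deltaTensor_le hξ hleb s hf hy
    _ ≤ ∑ s ∈ Λ, ∏ j ∈ s.support, powDiff (θ + 1) (s j) :=
        sum_le_sum fun s _ => prod_le_prod (fun j _ => deltaBound_nonneg θ (s j))
          fun j _ => deltaBound_le_powDiff hθ (s j)
    _ ≤ (#Λ : ℝ) ^ (θ + 1) := sum_prod_powDiff_le (by linarith) hlow

/-- if the univariate Lebesgue constants satisfy `λ_k ≤ (k+1)^θ` with `θ ≥ 1`,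
then the Lebesgue constant of the sparse interpolation operator `I_Λ = Σ_{s∈Λ} Δ_s`
satisfies `L_Λ ≤ |Λ|^{θ+1}` for every finite lower set `Λ`. -/
theorem stmt11 (ξ : ℕ → ℝ) (hξ : ∀ j, |ξ j| ≤ 1) (hinj : Function.Injective ξ)
    (θ : ℝ) (hθ : 1 ≤ θ)
    (hleb : ∀ k : ℕ, ∀ t ∈ Set.Icc (-1 : ℝ) 1,
      ∑ j ∈ Finset.range (k + 1), |lagb ξ k j t| ≤ ((k : ℝ) + 1) ^ θ)
    (Λ : Finset (ℕ →₀ ℕ)) (hΛ : Λ.Nonempty)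
    (hlow : ∀ s ∈ Λ, ∀ j : ℕ, 0 < s j → s - Finsupp.single j 1 ∈ Λ)
    (f : (ℕ → ℝ) → ℝ) (hf : ∀ y : ℕ → ℝ, (∀ j, |y j| ≤ 1) → |f y| ≤ 1) :
    ∀ y : ℕ → ℝ, (∀ j, |y j| ≤ 1) →
      |∑ s ∈ Λ, deltaTensor ξ s f y| ≤ (Λ.card : ℝ) ^ (θ + 1) :=
  stmt11_general ξ hξ θ hθ hleb Λ hlow f hf
end

section
/- Assume (‖ψ_j‖_{W^{1,∞}})_{j ∈ ℕ} ∈ ℓ_p(ℕ) for some 0 < p ≤ 1. Choose λ > 1, j_0 so that (λ-1)Σ_{j ≤ j_0} ‖ψ_j‖_{W^{1,∞}} ≤ r/6 and Σ_{j > j_0} ‖ψ_j‖_{W^{1,∞}} ≤ r/(12 e^q), put d_j = (4 e^q / r)‖ψ_j‖_{W^{1,∞}} for j > j_0, and define σ̃_s^{-1} = (Π_{j ≤ j_0} ((λ+1)/(2λ))^{s_j}) · Π_{j > j_0} (|s_F| d_j / s_j)^{s_j}, where s_F is the restriction of s to indices j > j_0. Then (σ̃_s^{-1})_{s ∈ F}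 ∈ ℓ_p(F). -/
/-!
Restricting `s` to `j < j₀` and to `j ≥ j₀` turns the summand into
`(θ ^ p) ^ |s_E| * w_d(s_F) ^ p`, where `θ = (λ + 1) / (2λ) < 1` and
`w_d(t) = ∏ⱼ (|t| dⱼ / tⱼ) ^ tⱼ`, so the sum is at most a product of two sums. A weight that is
geometric in the degree is summable over the multi-indices on a finite set.

For `w_d ^ p` only `d ∈ ℓ^p` and `∑ dⱼ < 1` matter (here `∑ dⱼ ≤ 1/3`). Pick `∑ dⱼ < μ < 1` and
a finite `E` with `∑_{j ∉ E} (e dⱼ / (1 - μ)) ^ p < 1`. The entropy bound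
`(a + b) ^ (a + b) μ ^ a (1 - μ) ^ b ≤ a ^ a b ^ b` splits
`w_d(t) ≤ w_{d/μ}(t|_E) w_{d/(1-μ)}(t|_Eᶜ)`. On `E`, AM-GM gives
`w_{d/μ}(v) ≤ (∑_E dⱼ / μ) ^ |v|`, geometric in `|v|`. Off `E`, `n ^ n ≤ eⁿ n!` and
`k! ≤ k ^ k` give `w_{d'}(u) ^ p ≤ multinomial(u) ∏ⱼ ((e d'ⱼ) ^ p) ^ uⱼ` since `p ≤ 1`, and by
the multinomial theorem these terms sum to `∑ₙ (∑ⱼ (e d'ⱼ) ^ p) ^ n < ∞`.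
-/

open Finset

variable {ι : Type*}

theorem Real.prod_pow_le_arith_mean_pow (S : Finset ι) (t : ι → ℕ) {z : ι → ℝ}
    (hz : ∀ j ∈ S, 0 ≤ z j) :
    ∏ j ∈ S, z j ^ t j ≤ ((∑ j ∈ S, t j * z j) / ∑ j ∈ S, t j) ^ ∑ j ∈ S, t j := by
  set N := ∑ j ∈ S, t j with hN
  rcases Nat.eq_zero_or_pos N with hN0 | hN0
  · rw [hN0, pow_zero]
    rw [hN, sum_eq_zero_iff] at hN0
    rw [prod_congr rfl fun j hj => by rw [hN0 j hj, pow_zero], prod_const_one]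
  have hNR : (N : ℝ) ≠ 0 := by positivity
  have hmean := Real.geom_mean_le_arith_mean_weighted S (fun j => t j / N) z
    (fun j _ => by positivity) (by rw [← sum_div, ← Nat.cast_sum, div_self hNR]) hz
  have hrhs : ∑ j ∈ S, t j / (N : ℝ) * z j = (∑ j ∈ S, t j * z j) / N := by
    rw [sum_div]
    exact sum_congr rfl fun j _ => by ring
  have hlhs : (∏ j ∈ S, z j ^ ((t j : ℝ) / N)) ^ N = ∏ j ∈ S, z j ^ t j := by
    rw [← prod_pow]
    refine prod_congr rfl fun j hj => ?_
    rw [← Real.rpow_natCast, ← Real.rpow_mul (hz j hj), div_mul_cancel₀ _ hNR, Real.rpow_natCast]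
  rw [← hlhs, ← hrhs]
  exact pow_le_pow_left₀ (prod_nonneg fun j hj => Real.rpow_nonneg (hz j hj) _) hmean N

theorem add_pow_add_mul_pow_mul_pow_le (a b : ℕ) {l : ℝ} (hl0 : 0 ≤ l) (hl1 : l ≤ 1) :
    ((a + b : ℕ) : ℝ) ^ (a + b) * l ^ a * (1 - l) ^ b ≤ (a : ℝ) ^ a * (b : ℝ) ^ b := by
  set n : ℝ := ((a + b : ℕ) : ℝ)
  have hmean := Real.prod_pow_le_arith_mean_pow univ ![a, b] (z := ![n * l / a, n * (1 - l) / b])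
    (fun j _ => by fin_cases j <;> simp <;> positivity)
  simp only [Fin.prod_univ_two, Fin.sum_univ_two, Matrix.cons_val_zero, Matrix.cons_val_one]
    at hmean
  have mul_div_le {x : ℝ} (hx : 0 ≤ x) (k : ℕ) : (k : ℝ) * (x / k) ≤ x := by
    rcases eq_or_ne (k : ℝ) 0 with hk | hk
    · simpa [hk] using hx
    · rw [mul_div_cancel₀ _ hk]
  have hbase : ((a : ℝ) * (n * l / a) + b * (n * (1 - l) / b)) / n ≤ 1 := by
    refine div_le_one_of_le₀ ?_ (Nat.cast_nonneg _)
    have := mul_div_le (mul_nonneg (Nat.cast_nonneg (a + b)) hl0) a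
    have := mul_div_le (mul_nonneg (Nat.cast_nonneg (a + b)) (sub_nonneg.2 hl1)) b
    linarith
  have hle := hmean.trans (pow_le_one₀ (by positivity) hbase)
  rw [div_pow, div_pow, div_mul_div_comm,
    div_le_one₀ (by exact_mod_cast Nat.mul_pos Nat.pow_self_pos Nat.pow_self_pos)] at hle
  calc _ = (n * l) ^ a * (n * (1 - l)) ^ b := by rw [mul_pow, mul_pow, pow_add]; ring
    _ ≤ _ := hle

theorem Summable.of_rpow_of_le_one {f : ι → ℝ} {p : ℝ} (hf : 0 ≤ f) (hp0 : 0 < p) (hp1 : p ≤ 1)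
    (h : Summable fun i => f i ^ p) : Summable f := by
  refine h.of_norm_bounded_eventually ?_
  filter_upwards [h.tendsto_cofinite_zero.eventually (gt_mem_nhds one_pos)] with i hi
  rw [Real.norm_of_nonneg (hf i)]
  refine Real.self_le_rpow_of_le_one (hf i) ?_ hp1
  by_contra! h1
  exact hi.not_ge (Real.one_le_rpow h1.le hp0.le)

namespace Finsupp

theorem degree_domCongr {α β M : Type*} [AddCommMonoid M] (e : α ≃ β) (t : α →₀ M) :
    (Finsupp.domCongr e t).degree = t.degree := by
  rw [domCongr_apply, equivMapDomain_eq_mapDomain, degree_mapDomain]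

theorem degree_option {α M : Type*} [AddCommMonoid M] (t : Option α →₀ M) :
    t.degree = t none + t.some.degree :=
  sum_option_index t (fun _ m => m) (fun _ => rfl) (fun _ _ _ => rfl)

theorem summable_pow_degree [Finite ι] {x : ℝ} (hx0 : 0 ≤ x) (hx1 : x < 1) :
    Summable fun t : ι →₀ ℕ => x ^ t.degree := by
  refine Finite.induction_empty_option (P := fun α => Summable fun t : α →₀ ℕ => x ^ t.degree)
    (fun {α β} e h => ?_) Summable.of_finite (fun {α} _ h => ?_) ι
  · refine (Equiv.summable_iff (f := fun t : β →₀ ℕ => x ^ t.degree)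
      (Finsupp.domCongr (M := ℕ) e).toEquiv).1 ?_
    simpa only [Function.comp_def, AddEquiv.toEquiv_eq_coe, AddEquiv.coe_toEquiv,
      degree_domCongr] using h
  · refine (Equiv.summable_iff (f := fun t : Option α →₀ ℕ => x ^ t.degree)
      optionEquiv.symm).1 ?_
    convert (summable_geometric_of_lt_one hx0 hx1).mul_of_nonneg h
      (fun _ => pow_nonneg hx0 _) (fun _ => pow_nonneg hx0 _) using 2 with t
    obtain ⟨h1, h2⟩ := Prod.ext_iff.1 (optionEquiv.apply_symm_apply t)
    rw [Function.comp_apply, degree_option, pow_add, ← h1, ← h2]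
    rfl

theorem prod_support_subtypeDomain {M N : Type*} [Zero M] [CommMonoid N] (s : ι →₀ M)
    (P : ι → Prop) [DecidablePred P] (F : ι → N) :
    ∏ j ∈ (s.subtypeDomain P).support, F j = ∏ j ∈ s.support.filter P, F j := by
  rw [support_subtypeDomain, prod_subtype_eq_prod_filter]

theorem degree_subtypeDomain {M : Type*} [AddCommMonoid M] (s : ι →₀ M) (P : ι → Prop)
    [DecidablePred P] : (s.subtypeDomain P).degree = ∑ j ∈ s.support.filter P, s j := by
  rw [degree_apply, support_subtypeDomain, ← sum_subtype_eq_sum_filter]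
  rfl

theorem summable_mul_subtypeDomain {M : Type*} [Zero M] {P Q : ι → Prop}
    (hPQ : ∀ j, P j ∨ Q j) {f : (Subtype P →₀ M) → ℝ} {g : (Subtype Q →₀ M) → ℝ}
    (hf : Summable f) (hg : Summable g) (hf0 : 0 ≤ f) (hg0 : 0 ≤ g) :
    Summable fun s : ι →₀ M => f (s.subtypeDomain P) * g (s.subtypeDomain Q) := by
  have hinj : Function.Injective fun s : ι →₀ M => (s.subtypeDomain P, s.subtypeDomain Q) := by
    intro s t h
    simp only [Prod.mk.injEq] at h
    ext j
    rcases hPQ j with hj | hj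
    · simpa using DFunLike.congr_fun h.1 ⟨j, hj⟩
    · simpa using DFunLike.congr_fun h.2 ⟨j, hj⟩
  exact ((hf.mul_of_nonneg hg hf0 hg0).comp_injective hinj :)

theorem factorial_degree_eq_multinomial_mul (s : ι →₀ ℕ) :
    ((s.degree).factorial : ℝ) = s.multinomial * ∏ j ∈ s.support, ((s j).factorial : ℝ) := by
  rw [multinomial_eq, degree_apply, ← Nat.multinomial_spec]
  push_cast
  ring

end Finsupp

theorem sum_multinomial_mul_prod_pow_le {c : ι → ℝ} (hc0 : 0 ≤ c) {T : Finset (ι →₀ ℕ)}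
    {W : Finset ι} {N : ℕ} (hW : ∀ s ∈ T, s.support ⊆ W) (hN : ∀ s ∈ T, s.degree ≤ N) :
    ∑ s ∈ T, (s.multinomial : ℝ) * ∏ j ∈ s.support, c j ^ s j ≤
      ∑ n ∈ range (N + 1), (∑ j ∈ W, c j) ^ n := by
  classical
  set F : (Σ _ : ℕ, ι → ℕ) → ℝ := fun x => Nat.multinomial W x.2 * ∏ j ∈ W, c j ^ x.2 j
  set e : (ι →₀ ℕ) → Σ _ : ℕ, ι → ℕ := fun s => ⟨s.degree, s⟩
  have hterm : ∀ s ∈ T, (s.multinomial : ℝ) * ∏ j ∈ s.support, c j ^ s j = F (e s) := by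
    intro s hs
    rw [Finsupp.multinomial_eq_of_support_subset (hW s hs),
      prod_subset (hW s hs) fun j _ hj => by rw [Finsupp.notMem_support_iff.1 hj, pow_zero]]
  have hmaps : T.image e ⊆ (range (N + 1)).sigma fun n => piAntidiag W n := by
    intro x hx
    obtain ⟨s, hs, rfl⟩ := mem_image.1 hx
    refine mem_sigma.2 ⟨mem_range.2 (Nat.lt_succ_of_le (hN s hs)),
      mem_piAntidiag.2 ⟨?_, fun j hj => hW s hs (Finsupp.mem_support_iff.2 hj)⟩⟩
    show W.sum s = ∑ j ∈ s.support, s j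
    exact (sum_subset (hW s hs) fun j _ hj => Finsupp.notMem_support_iff.1 hj).symm
  calc ∑ s ∈ T, (s.multinomial : ℝ) * ∏ j ∈ s.support, c j ^ s j
      = ∑ x ∈ T.image e, F x := by
        rw [sum_image fun s _ t _ h => DFunLike.coe_injective (congrArg Sigma.snd h)]
        exact sum_congr rfl hterm
    _ ≤ ∑ x ∈ (range (N + 1)).sigma (fun n => piAntidiag W n), F x :=
        sum_le_sum_of_subset_of_nonneg hmaps fun x _ _ =>
          mul_nonneg (Nat.cast_nonneg _) (prod_nonneg fun j _ => pow_nonneg (hc0 j) _)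
    _ = ∑ n ∈ range (N + 1), (∑ j ∈ W, c j) ^ n := by
        rw [sum_sigma]
        exact sum_congr rfl fun n _ => (sum_pow_eq_sum_piAntidiag W c n).symm

theorem summable_multinomial_mul_prod_pow {c : ι → ℝ} (hc0 : 0 ≤ c) (hc : Summable c)
    (hc1 : ∑' j, c j < 1) :
    Summable fun s : ι →₀ ℕ => (s.multinomial : ℝ) * ∏ j ∈ s.support, c j ^ s j := by
  classical
  have hx0 : 0 ≤ ∑' j, c j := tsum_nonneg hc0
  refine summable_of_sum_le (c := (1 - ∑' j, c j)⁻¹)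
    (fun s => mul_nonneg (Nat.cast_nonneg _) (prod_nonneg fun j _ => pow_nonneg (hc0 j) _))
    fun T => ?_
  calc _ ≤ ∑ n ∈ range (T.sup (fun s => s.degree) + 1), (∑ j ∈ T.sup Finsupp.support, c j) ^ n :=
        sum_multinomial_mul_prod_pow_le hc0 (fun s hs => le_sup (f := Finsupp.support) hs)
          (fun s hs => le_sup (f := fun s => s.degree) hs)
    _ ≤ ∑ n ∈ range (T.sup (fun s => s.degree) + 1), (∑' j, c j) ^ n := by
        gcongr
        · exact sum_nonneg fun j _ => hc0 j
        · exact hc.sum_le_tsum _ fun j _ => hc0 j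
    _ ≤ (1 - ∑' j, c j)⁻¹ := by
        rw [← tsum_geometric_of_lt_one hx0 hc1]
        exact (summable_geometric_of_lt_one hx0 hc1).sum_le_tsum _ fun n _ => pow_nonneg hx0 n

noncomputable def degreeWeight (d : ι → ℝ) (s : ι →₀ ℕ) : ℝ :=
  ∏ j ∈ s.support, ((s.degree : ℝ) * d j / s j) ^ s j

variable {d : ι → ℝ}

theorem degreeWeight_nonneg (hd : 0 ≤ d) (s : ι →₀ ℕ) : 0 ≤ degreeWeight d s :=
  prod_nonneg fun j _ => pow_nonneg (div_nonneg (mul_nonneg (Nat.cast_nonneg _) (hd j))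
    (Nat.cast_nonneg _)) _

theorem degreeWeight_eq_pow_mul_prod (d : ι → ℝ) (s : ι →₀ ℕ) :
    degreeWeight d s = (s.degree : ℝ) ^ s.degree * ∏ j ∈ s.support, (d j / s j) ^ s j := by
  rw [degreeWeight, Finsupp.degree_apply, ← prod_pow_eq_pow_sum, ← prod_mul_distrib]
  exact prod_congr rfl fun j _ => by rw [← mul_pow, mul_div_assoc]

theorem degreeWeight_const_mul (c : ℝ) (d : ι → ℝ) (s : ι →₀ ℕ) :
    degreeWeight (fun j => c * d j) s = c ^ s.degree * degreeWeight d s := by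
  rw [degreeWeight, degreeWeight, Finsupp.degree_apply, ← prod_pow_eq_pow_sum,
    ← prod_mul_distrib]
  exact prod_congr rfl fun j _ => by rw [← mul_pow]; ring

theorem degreeWeight_subtypeDomain (d : ι → ℝ) (s : ι →₀ ℕ) (P : ι → Prop) [DecidablePred P] :
    degreeWeight (fun j : Subtype P => d j) (s.subtypeDomain P) =
      ∏ j ∈ s.support.filter P, (((∑ i ∈ s.support.filter P, s i : ℕ) : ℝ) * d j / s j) ^ s j := by
  rw [degreeWeight, Finsupp.degree_subtypeDomain]
  simp only [Finsupp.subtypeDomain_apply]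
  exact Finsupp.prod_support_subtypeDomain s P
    (fun j => (((∑ i ∈ s.support.filter P, s i : ℕ) : ℝ) * d j / s j) ^ s j)

theorem degreeWeight_subtypeDomain_eq_pow_mul_prod (d : ι → ℝ) (s : ι →₀ ℕ) (P : ι → Prop)
    [DecidablePred P] :
    degreeWeight (fun j : Subtype P => d j) (s.subtypeDomain P) =
      ((∑ i ∈ s.support.filter P, s i : ℕ) : ℝ) ^ (∑ i ∈ s.support.filter P, s i) *
        ∏ j ∈ s.support.filter P, (d j / s j) ^ s j := by
  rw [degreeWeight_eq_pow_mul_prod, Finsupp.degree_subtypeDomain]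
  simp only [Finsupp.subtypeDomain_apply]
  rw [Finsupp.prod_support_subtypeDomain s P (fun j => (d j / s j) ^ s j)]

theorem degreeWeight_le_sum_pow (hd : 0 ≤ d) (s : ι →₀ ℕ) :
    degreeWeight d s ≤ (∑ j ∈ s.support, d j) ^ s.degree := by
  have hmean := Real.prod_pow_le_arith_mean_pow s.support s
    (z := fun j => (s.degree : ℝ) * d j / s j)
    (fun j _ => div_nonneg (mul_nonneg (Nat.cast_nonneg _) (hd j)) (Nat.cast_nonneg _))
  have hsum : ∑ j ∈ s.support, (s j : ℝ) * (s.degree * d j / s j) =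
      s.degree * ∑ j ∈ s.support, d j := by
    rw [mul_sum]
    exact sum_congr rfl fun j hj =>
      mul_div_cancel₀ _ (Nat.cast_ne_zero.2 (Finsupp.mem_support_iff.1 hj))
  rw [hsum, ← Finsupp.degree_apply] at hmean
  refine hmean.trans_eq ?_
  rcases eq_or_ne s.degree 0 with h | h
  · rw [h, pow_zero, pow_zero]
  · rw [mul_div_cancel_left₀ _ (Nat.cast_ne_zero.2 h)]

theorem degreeWeight_le_mul_subtypeDomain (hd : 0 ≤ d) {l : ℝ} (hl0 : 0 < l) (hl1 : l < 1)
    (P : ι → Prop) [DecidablePred P] (s : ι →₀ ℕ) :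
    degreeWeight d s ≤ degreeWeight (fun j : Subtype P => l⁻¹ * d j) (s.subtypeDomain P) *
      degreeWeight (fun j : {j // ¬ P j} => (1 - l)⁻¹ * d j) (s.subtypeDomain fun j => ¬ P j) := by
  rw [degreeWeight_const_mul, degreeWeight_const_mul, degreeWeight_subtypeDomain_eq_pow_mul_prod,
    degreeWeight_subtypeDomain_eq_pow_mul_prod, Finsupp.degree_subtypeDomain,
    Finsupp.degree_subtypeDomain, degreeWeight_eq_pow_mul_prod,
    ← prod_filter_mul_prod_filter_not s.support P, Finsupp.degree_apply,
    ← sum_filter_add_sum_filter_not s.support P]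
  set a := ∑ i ∈ s.support.filter P, s i
  set b := ∑ i ∈ s.support.filter (fun j => ¬ P j), s i
  have hA : 0 ≤ ∏ j ∈ s.support.filter P, (d j / s j) ^ s j :=
    prod_nonneg fun j _ => pow_nonneg (div_nonneg (hd j) (Nat.cast_nonneg _)) _
  have hB : 0 ≤ ∏ j ∈ s.support.filter (fun j => ¬ P j), (d j / s j) ^ s j :=
    prod_nonneg fun j _ => pow_nonneg (div_nonneg (hd j) (Nat.cast_nonneg _)) _
  have hl : 0 < l ^ a * (1 - l) ^ b := by have := sub_pos.2 hl1; positivity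
  have key : ((a + b : ℕ) : ℝ) ^ (a + b) ≤
      l⁻¹ ^ a * (1 - l)⁻¹ ^ b * ((a : ℝ) ^ a * (b : ℝ) ^ b) := by
    rw [inv_pow, inv_pow, ← mul_inv, ← div_eq_inv_mul, le_div_iff₀ hl, ← mul_assoc]
    exact add_pow_add_mul_pow_mul_pow_le a b hl0.le hl1.le
  calc _ ≤ (l⁻¹ ^ a * (1 - l)⁻¹ ^ b * ((a : ℝ) ^ a * (b : ℝ) ^ b)) * (_ * _) :=
        mul_le_mul_of_nonneg_right key (mul_nonneg hA hB)
    _ = _ := by ring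

theorem degreeWeight_le_multinomial_mul (hd : 0 ≤ d) (s : ι →₀ ℕ) :
    degreeWeight d s ≤ s.multinomial * ∏ j ∈ s.support, (Real.exp 1 * d j) ^ s j := by
  have hstirling : (s.degree : ℝ) ^ s.degree ≤ Real.exp 1 ^ s.degree * (s.degree).factorial := by
    rw [Real.exp_one_pow, ← div_le_iff₀ (by positivity)]
    exact Real.pow_div_factorial_le_exp _ (Nat.cast_nonneg _) _
  have hfactor : ∀ j ∈ s.support, ((s j).factorial : ℝ) * (d j / s j) ^ s j ≤ d j ^ s j := by
    intro j hj
    calc ((s j).factorial : ℝ) * (d j / s j) ^ s j ≤ (s j : ℝ) ^ s j * (d j / s j) ^ s j :=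
          mul_le_mul_of_nonneg_right (by exact_mod_cast Nat.factorial_le_pow _)
            (pow_nonneg (div_nonneg (hd j) (Nat.cast_nonneg _)) _)
      _ = d j ^ s j := by
          rw [← mul_pow, mul_div_cancel₀ _ (Nat.cast_ne_zero.2 (Finsupp.mem_support_iff.1 hj))]
  rw [degreeWeight_eq_pow_mul_prod]
  calc (s.degree : ℝ) ^ s.degree * ∏ j ∈ s.support, (d j / s j) ^ s j
      ≤ Real.exp 1 ^ s.degree * (s.degree).factorial * ∏ j ∈ s.support, (d j / s j) ^ s j :=
        mul_le_mul_of_nonneg_right hstirling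
          (prod_nonneg fun j _ => pow_nonneg (div_nonneg (hd j) (Nat.cast_nonneg _)) _)
    _ = Real.exp 1 ^ s.degree * s.multinomial *
          ∏ j ∈ s.support, ((s j).factorial : ℝ) * (d j / s j) ^ s j := by
        rw [Finsupp.factorial_degree_eq_multinomial_mul, prod_mul_distrib]; ring
    _ ≤ Real.exp 1 ^ s.degree * s.multinomial * ∏ j ∈ s.support, d j ^ s j := by
        gcongr with j hj
        · exact fun j _ => mul_nonneg (by positivity)
            (pow_nonneg (div_nonneg (hd j) (Nat.cast_nonneg _)) _)
        · exact hfactor j hj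
    _ = s.multinomial * ∏ j ∈ s.support, (Real.exp 1 * d j) ^ s j := by
        rw [Finsupp.degree_apply, ← prod_pow_eq_pow_sum]
        simp only [mul_pow, prod_mul_distrib]
        ring

theorem degreeWeight_rpow_le_multinomial_mul (hd : 0 ≤ d) {p : ℝ} (hp0 : 0 ≤ p) (hp1 : p ≤ 1)
    (s : ι →₀ ℕ) :
    degreeWeight d s ^ p ≤ s.multinomial * ∏ j ∈ s.support, ((Real.exp 1 * d j) ^ p) ^ s j := by
  have hed : ∀ j, 0 ≤ Real.exp 1 * d j := fun j => mul_nonneg (Real.exp_pos 1).le (hd j)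
  calc degreeWeight d s ^ p
      ≤ ((s.multinomial : ℝ) * ∏ j ∈ s.support, (Real.exp 1 * d j) ^ s j) ^ p :=
        Real.rpow_le_rpow (degreeWeight_nonneg hd s) (degreeWeight_le_multinomial_mul hd s) hp0
    _ = (s.multinomial : ℝ) ^ p * ∏ j ∈ s.support, ((Real.exp 1 * d j) ^ p) ^ s j := by
        rw [Real.mul_rpow (Nat.cast_nonneg _) (prod_nonneg fun j _ => pow_nonneg (hed j) _),
          ← Real.finsetProd_rpow _ _ fun j _ => pow_nonneg (hed j) _]
        simp only [Real.rpow_pow_comm (hed _)]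
    _ ≤ _ := by
        gcongr
        · exact prod_nonneg fun j _ => pow_nonneg (Real.rpow_nonneg (hed j) _) _
        · rw [Finsupp.multinomial_eq]
          exact Real.rpow_le_self_of_one_le (by exact_mod_cast Nat.multinomial_pos _ _) hp1

theorem summable_degreeWeight_rpow_of_fintype [Fintype ι] (hd : 0 ≤ d) {p : ℝ} (hp : 0 < p)
    (hd1 : ∑ j, d j < 1) : Summable fun s : ι →₀ ℕ => degreeWeight d s ^ p := by
  have hsum0 : 0 ≤ ∑ j, d j := sum_nonneg fun j _ => hd j
  refine (Finsupp.summable_pow_degree (Real.rpow_nonneg hsum0 p)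
    (Real.rpow_lt_one hsum0 hd1 hp)).of_nonneg_of_le
    (fun s => Real.rpow_nonneg (degreeWeight_nonneg hd s) p) fun s => ?_
  calc degreeWeight d s ^ p ≤ ((∑ j, d j) ^ s.degree) ^ p :=
        Real.rpow_le_rpow (degreeWeight_nonneg hd s) ((degreeWeight_le_sum_pow hd s).trans
          (pow_le_pow_left₀ (sum_nonneg fun j _ => hd j)
            (sum_le_sum_of_subset_of_nonneg (subset_univ _) fun j _ _ => hd j) _)) hp.le
    _ = ((∑ j, d j) ^ p) ^ s.degree := (Real.rpow_pow_comm hsum0 p _).symm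

theorem summable_degreeWeight_rpow_of_tsum_lt_one (hd : 0 ≤ d) {p : ℝ} (hp0 : 0 ≤ p)
    (hp1 : p ≤ 1) (hc : Summable fun j => (Real.exp 1 * d j) ^ p)
    (hc1 : ∑' j, (Real.exp 1 * d j) ^ p < 1) :
    Summable fun s : ι →₀ ℕ => degreeWeight d s ^ p :=
  (summable_multinomial_mul_prod_pow
    (fun j => Real.rpow_nonneg (mul_nonneg (Real.exp_pos 1).le (hd j)) p) hc hc1).of_nonneg_of_le
    (fun s => Real.rpow_nonneg (degreeWeight_nonneg hd s) p)
    (degreeWeight_rpow_le_multinomial_mul hd hp0 hp1)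

theorem summable_degreeWeight_rpow (hd : 0 ≤ d) {p : ℝ} (hp0 : 0 < p) (hp1 : p ≤ 1)
    (hdp : Summable fun j => d j ^ p) (hd1 : ∑' j, d j < 1) :
    Summable fun s : ι →₀ ℕ => degreeWeight d s ^ p := by
  classical
  have hds : Summable d := Summable.of_rpow_of_le_one hd hp0 hp1 hdp
  obtain ⟨l, hlt, hl1⟩ := exists_between hd1
  have hl0 : 0 < l := (tsum_nonneg hd).trans_lt hlt
  set c : ι → ℝ := fun j => (Real.exp 1 * ((1 - l)⁻¹ * d j)) ^ p
  have hc : Summable c := by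
    simpa only [c, ← mul_assoc, Real.mul_rpow (by positivity : 0 ≤ Real.exp 1 * (1 - l)⁻¹) (hd _)]
      using hdp.mul_left ((Real.exp 1 * (1 - l)⁻¹) ^ p)
  obtain ⟨E, hE⟩ : ∃ E : Finset ι, ∑' j : {j // j ∉ E}, c j < 1 :=
    ((tendsto_order.1 (tendsto_tsum_compl_atTop_zero c)).2 1 one_pos).exists
  have hdE : 0 ≤ fun j : {j // j ∈ E} => l⁻¹ * d j :=
    fun j => mul_nonneg (inv_nonneg.2 hl0.le) (hd _)
  have hdE' : 0 ≤ fun j : {j // j ∉ E} => (1 - l)⁻¹ * d j :=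
    fun j => mul_nonneg (inv_nonneg.2 (sub_pos.2 hl1).le) (hd _)
  have hhead : Summable fun v : {j // j ∈ E} →₀ ℕ =>
      degreeWeight (fun j : {j // j ∈ E} => l⁻¹ * d j) v ^ p := by
    refine summable_degreeWeight_rpow_of_fintype hdE hp0 ?_
    have hsum : ∑ j : {j // j ∈ E}, l⁻¹ * d j = l⁻¹ * ∑ j ∈ E, d j := by
      rw [mul_sum]
      exact sum_coe_sort E fun j => l⁻¹ * d j
    rw [hsum, inv_mul_lt_one₀ hl0]
    exact (hds.sum_le_tsum E fun j _ => hd j).trans_lt hlt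
  have htail : Summable fun w : {j // j ∉ E} →₀ ℕ =>
      degreeWeight (fun j : {j // j ∉ E} => (1 - l)⁻¹ * d j) w ^ p :=
    summable_degreeWeight_rpow_of_tsum_lt_one hdE' hp0.le hp1
      (hc.comp_injective Subtype.val_injective) hE
  refine (Finsupp.summable_mul_subtypeDomain (fun j => em (j ∈ E)) hhead htail
    (fun v => Real.rpow_nonneg (degreeWeight_nonneg hdE v) p)
    (fun w => Real.rpow_nonneg (degreeWeight_nonneg hdE' w) p)).of_nonneg_of_le
    (fun s => Real.rpow_nonneg (degreeWeight_nonneg hd s) p) fun s => ?_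
  rw [← Real.mul_rpow (degreeWeight_nonneg hdE _) (degreeWeight_nonneg hdE' _)]
  exact Real.rpow_le_rpow (degreeWeight_nonneg hd s)
    (degreeWeight_le_mul_subtypeDomain hd hl0 hl1 (· ∈ E) s) hp0.le

theorem stmt14_general (p q r lam : ℝ) (hp0 : 0 < p) (hp1 : p ≤ 1) (hr : 0 < r)
    (hlam : 1 < lam) (j0 : ℕ)
    (ψn : ℕ → ℝ) (hψn : ∀ j, 0 ≤ ψn j)
    (hψp : Summable fun j => ψn j ^ p)
    (hF : (∑' j : {j : ℕ // j0 ≤ j}, ψn j) ≤ r / (12 * Real.exp q)) :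
    Summable fun s : ℕ →₀ ℕ =>
      ((∏ j ∈ s.support.filter (· < j0), ((lam + 1) / (2 * lam)) ^ s j) *
        ∏ j ∈ s.support.filter (j0 ≤ ·),
          (((∑ i ∈ s.support.filter (j0 ≤ ·), s i : ℕ) : ℝ) *
              (4 * Real.exp q / r * ψn j) / (s j : ℝ)) ^ s j) ^ p := by
  set θ := (lam + 1) / (2 * lam)
  have hθ0 : 0 ≤ θ := by positivity
  have hθ1 : θ < 1 := by rw [div_lt_one (by linarith)]; linarith
  set K := 4 * Real.exp q / r
  have hK : 0 ≤ K := by positivity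
  set d : {j : ℕ // j0 ≤ j} → ℝ := fun j => K * ψn j
  have hd : 0 ≤ d := fun j => mul_nonneg hK (hψn j)
  have hdp : Summable fun j => d j ^ p := by
    simpa only [d, Function.comp_def, Real.mul_rpow hK (hψn _)] using
      (hψp.comp_injective Subtype.val_injective).mul_left (K ^ p)
  have hd1 : ∑' j, d j < 1 := by
    rw [tsum_mul_left]
    calc K * ∑' j : {j // j0 ≤ j}, ψn j ≤ K * (r / (12 * Real.exp q)) :=
          mul_le_mul_of_nonneg_left hF hK
      _ < 1 := by
          rw [show K * (r / (12 * Real.exp q)) = 1 / 3 by simp only [K]; field_simp; ring]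
          norm_num
  have hhead : Summable fun t : {j // j < j0} →₀ ℕ => (θ ^ p) ^ t.degree :=
    Finsupp.summable_pow_degree (Real.rpow_nonneg hθ0 p) (Real.rpow_lt_one hθ0 hθ1 hp0)
  refine (Finsupp.summable_mul_subtypeDomain (P := (· < j0)) (Q := (j0 ≤ ·))
    (fun j => lt_or_ge j j0) hhead (summable_degreeWeight_rpow hd hp0 hp1 hdp hd1)
    (fun _ => by positivity) (fun s => Real.rpow_nonneg (degreeWeight_nonneg hd s) p)).congr
    fun s => ?_
  rw [degreeWeight_subtypeDomain (fun j => K * ψn j), Finsupp.degree_subtypeDomain,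
    prod_pow_eq_pow_sum, Real.mul_rpow (pow_nonneg hθ0 _) (prod_nonneg fun j _ => pow_nonneg
    (div_nonneg (mul_nonneg (Nat.cast_nonneg _) (mul_nonneg hK (hψn j))) (Nat.cast_nonneg _)) _),
    Real.rpow_pow_comm hθ0]

/-- `ℓ_p`-summability of the weight sequence `(σ̃_s⁻¹)_{s∈F}` built from the
splitting of `ℕ` into `E = {j < j₀}` and `F = {j ≥ j₀}`: here `ψn j = ‖ψ_j‖_{W^{1,∞}}`,
`d_j = (4e^q/r)ψn j`, `|s_F| = Σ_{j ≥ j₀} s_j`, and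
`σ̃_s⁻¹ = (Π_{j<j₀} ((λ+1)/(2λ))^{s_j}) · Π_{j≥j₀} (|s_F| d_j / s_j)^{s_j}`. -/
theorem stmt14 (p q r lam : ℝ) (hp0 : 0 < p) (hp1 : p ≤ 1) (hq : 1 < q) (hr : 0 < r)
    (hlam : 1 < lam) (j0 : ℕ)
    (ψn : ℕ → ℝ) (hψn : ∀ j, 0 ≤ ψn j)
    (hψp : Summable fun j => ψn j ^ p)
    (hE : (lam - 1) * ∑ j ∈ Finset.range j0, ψn j ≤ r / 6)
    (hF : (∑' j : {j : ℕ // j0 ≤ j}, ψn j) ≤ r / (12 * Real.exp q)) :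
    Summable fun s : ℕ →₀ ℕ =>
      ((∏ j ∈ s.support.filter (· < j0), ((lam + 1) / (2 * lam)) ^ s j) *
        ∏ j ∈ s.support.filter (j0 ≤ ·),
          (((∑ i ∈ s.support.filter (j0 ≤ ·), s i : ℕ) : ℝ) *
              (4 * Real.exp q / r * ψn j) / (s j : ℝ)) ^ s j) ^ p :=
  stmt14_general p q r lam hp0 hp1 hr hlam j0 ψn hψn hψp hF
end
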